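/- arXiv:2511.18952 — 3 statements merged into one kernel-verified Lean document; each statement's English description precedes it below -/
import Mathlib

section
/- For all integers k and d with k ≥ d + 1 ≥ 2, there exists a digraph D = (V, A) with ν_f(D) = k + (d−1)/d such that D does not contain k pairwise arc-disjoint spanning arborescences together with a further arc-disjoint branching F satisfying both |A(F)| > ((d−1)/d)·(|V| − 1) and the property that F is a spanning arborescence or F has a component with at least d arcs. -/
/-!
Digraphs may have parallel arcs but no loops.  We model a digraph `D = (V, A)` by a finite
vertex type `V`, a finite arc type `α` and maps `tail head : α → V` with `tail a ≠ head a`.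
Subdigraphs are given by their arc sets (`Finset α`) together with vertex sets (`Finset V`).
-/

attribute [local instance] Classical.propDecidable

/-- One step from `u` to `w` along an arc of the arc set `B`. -/
def DiStep {V α : Type} (tail head : α → V) (B : Finset α) (u w : V) : Prop :=
  ∃ a ∈ B, tail a = u ∧ head a = w

/-- `w` is reachable from `u` by a directed path using arcs of `B`. -/
def DiReach {V α : Type} (tail head : α → V) (B : Finset α) (u w : V) : Prop :=
  Relation.ReflTransGen (DiStep tail head B) u w

/-- `d_B^-(X)`: the number of arcs of `B` with tail outside `X` and head in `X`. -/
noncomputable def inDeg {V α : Type} (tail head : α → V) (B : Finset α) (X : Finset V) : ℕ :=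
  (B.filter fun a => tail a ∉ X ∧ head a ∈ X).card

/-- The arc set `B` is an `r`-arborescence with vertex set `S`:  all arcs have both ends in
`S`, the root `r` has in-degree `0`, every other vertex of `S` has in-degree exactly `1`, and
every vertex of `S` is reachable from `r` (hence there is exactly one directed path from `r`
to each vertex, and the underlying graph is a tree). -/
def IsArborescence {V α : Type} (tail head : α → V) (S : Finset V) (B : Finset α)
    (r : V) : Prop :=
  r ∈ S ∧ (∀ a ∈ B, tail a ∈ S ∧ head a ∈ S) ∧
    (∀ a ∈ B, head a ≠ r) ∧
    (∀ v ∈ S, v ≠ r → (B.filter fun a => head a = v).card = 1) ∧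
    ∀ v ∈ S, DiReach tail head B r v

/-- The arc set `B` is a branching with vertex set `S` and root set `R`: every component is
an arborescence rooted at the member of `R` it contains. -/
def IsBranching {V α : Type} (tail head : α → V) (S : Finset V) (B : Finset α)
    (R : Finset V) : Prop :=
  R ⊆ S ∧ (∀ a ∈ B, tail a ∈ S ∧ head a ∈ S) ∧
    (∀ r ∈ R, ∀ a ∈ B, head a ≠ r) ∧
    (∀ v ∈ S, v ∉ R → (B.filter fun a => head a = v).card = 1) ∧
    ∀ v ∈ S, ∃ r ∈ R, DiReach tail head B r v

/-- The arc set of the component of a branching `B` rooted at `r`. -/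
noncomputable def compArcs {V α : Type} (tail head : α → V) (B : Finset α) (r : V) :
    Finset α :=
  B.filter fun a => DiReach tail head B r (head a)

/-- A subpartition of the vertex set: a family of pairwise disjoint nonempty subsets. -/
def IsSubpartition {V : Type} (P : Finset (Finset V)) : Prop :=
  (∀ X ∈ P, X.Nonempty) ∧ ∀ X ∈ P, ∀ Y ∈ P, X ≠ Y → Disjoint X Y

namespace SharpAux

def eTail (k d : ℕ) (a : Fin (d * k + (d - 1))) : Fin (d + 1) :=
  ⟨min (a.val / k) d, by omega⟩

def eHead (k d : ℕ) (a : Fin (d * k + (d - 1))) : Fin (d + 1) :=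
  ⟨if a.val / k < d then a.val / k + 1 else 0, by split <;> omega⟩

lemma card_interval (m l r : ℕ) (h : r ≤ m) :
    ((Finset.univ : Finset (Fin m)).filter fun a => l ≤ a.val ∧ a.val < r).card = r - l := by
  rw [show ((Finset.univ : Finset (Fin m)).filter fun a => l ≤ a.val ∧ a.val < r)
      = (Finset.Ico l r).attachFin (fun x hx => lt_of_lt_of_le (Finset.mem_Ico.1 hx).2 h) by
    ext a; simp [Finset.mem_attachFin]]
  rw [Finset.card_attachFin, Nat.card_Ico]

lemma filter_ext {α : Type} (p : α → Prop) (h1 h2 : DecidablePred p) (s : Finset α) :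
    @Finset.filter α p h1 s = @Finset.filter α p h2 s := by
  ext a
  simp only [Finset.mem_filter]

variable {k d : ℕ}

lemma fwd_facts (hk1 : 1 ≤ k) (a : Fin (d * k + (d - 1))) (ha : a.val < d * k) :
    a.val / k < d ∧ (eTail k d a).val = a.val / k ∧ (eHead k d a).val = a.val / k + 1 := by
  have h1 : a.val / k < d := (Nat.div_lt_iff_lt_mul hk1).2 ha
  refine ⟨h1, ?_, ?_⟩
  · simp [eTail, Nat.min_eq_left h1.le]
  · simp [eHead, h1]

lemma back_facts (hk1 : 1 ≤ k) (a : Fin (d * k + (d - 1))) (ha : d * k ≤ a.val) :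
    eTail k d a = Fin.last d ∧ eHead k d a = 0 := by
  have h1 : d ≤ a.val / k := (Nat.le_div_iff_mul_le hk1).2 ha
  constructor
  · simp [eTail, Fin.ext_iff, Nat.min_eq_right h1]
  · simp [eHead, Fin.ext_iff, Nat.not_lt.2 h1]

lemma noloop (hk1 : 1 ≤ k) (a : Fin (d * k + (d - 1))) : eTail k d a ≠ eHead k d a := by
  rcases lt_or_ge a.val (d * k) with h | h
  · obtain ⟨h1, h2, h3⟩ := fwd_facts hk1 a h
    intro hc; rw [Fin.ext_iff, h2, h3] at hc; omega
  · obtain ⟨h1, h2⟩ := back_facts hk1 a h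
    rw [h1, h2]
    have hd2 : 1 ≤ d - 1 := by have := a.isLt; omega
    intro hc
    have := congrArg Fin.val hc
    simp [Fin.last] at this
    omega

lemma inDeg_ge_back (hk1 : 1 ≤ k) (X : Finset (Fin (d + 1)))
    (h0 : (0 : Fin (d + 1)) ∈ X) (hdX : Fin.last d ∉ X) :
    d - 1 ≤ inDeg (eTail k d) (eHead k d) Finset.univ X := by
  unfold inDeg
  refine le_trans ?_ (Finset.card_le_card
    (s := (Finset.univ : Finset (Fin (d * k + (d - 1)))).filter
      fun a => d * k ≤ a.val ∧ a.val < d * k + (d - 1)) fun a ha => ?_)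
  · rw [card_interval _ _ _ le_rfl]; omega
  · simp only [Finset.mem_filter, Finset.mem_univ, true_and] at ha ⊢
    obtain ⟨h1, h2⟩ := back_facts hk1 a ha.1
    rw [h1, h2]; exact ⟨hdX, h0⟩

lemma inDeg_ge_fwd (hk1 : 1 ≤ k) (X : Finset (Fin (d + 1))) (i : ℕ) (hi : i < d)
    (hiX : (⟨i, by omega⟩ : Fin (d + 1)) ∉ X) (hi1X : (⟨i + 1, by omega⟩ : Fin (d + 1)) ∈ X) :
    k ≤ inDeg (eTail k d) (eHead k d) Finset.univ X := by
  unfold inDeg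
  have hikm : i * k + k ≤ d * k + (d - 1) := by nlinarith
  refine le_trans ?_ (Finset.card_le_card
    (s := (Finset.univ : Finset (Fin (d * k + (d - 1)))).filter
      fun a => i * k ≤ a.val ∧ a.val < i * k + k) fun a ha => ?_)
  · rw [card_interval _ _ _ hikm]; omega
  · simp only [Finset.mem_filter, Finset.mem_univ, true_and] at ha ⊢
    have hlt : a.val < d * k := by nlinarith [ha.1, ha.2]
    obtain ⟨h1, h2, h3⟩ := fwd_facts hk1 a hlt
    have hdiv : a.val / k = i := Nat.div_eq_of_lt_le ha.1 (by rw [add_mul]; omega)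
    have ht : eTail k d a = ⟨i, by omega⟩ := by apply Fin.ext; simp [h2, hdiv]
    have hh : eHead k d a = ⟨i + 1, by omega⟩ := by apply Fin.ext; simp [h3, hdiv]
    exact ⟨ht ▸ hiX, hh ▸ hi1X⟩

lemma down (X : Finset (Fin (d + 1)))
    (h : ∀ j (_ : j < d), (⟨j + 1, by omega⟩ : Fin (d + 1)) ∈ X →
      (⟨j, by omega⟩ : Fin (d + 1)) ∈ X) :
    ∀ j (hj : j < d + 1), (⟨j, hj⟩ : Fin (d + 1)) ∈ X →
      ∀ i (hi : i < d + 1), i ≤ j → (⟨i, hi⟩ : Fin (d + 1)) ∈ X := by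
  intro j
  induction j with
  | zero =>
    intro hj hx i hi hij
    have : i = 0 := by omega
    subst this; exact hx
  | succ j ih =>
    intro hj hx i hi hij
    have hj' : j < d + 1 := by omega
    have hxj : (⟨j, hj'⟩ : Fin (d + 1)) ∈ X := h j (by omega) hx
    rcases Nat.eq_or_lt_of_le hij with he | hlt
    · subst he; exact hx
    · exact ih hj' hxj i hi (by omega)

lemma inDeg_ge_k (hk1 : 1 ≤ k) (X : Finset (Fin (d + 1))) (hX : X.Nonempty)
    (hc : (0 : Fin (d + 1)) ∉ X ∨ (Fin.last d ∈ X ∧ X ≠ Finset.univ)) :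
    k ≤ inDeg (eTail k d) (eHead k d) Finset.univ X := by
  by_cases hent : ∃ i, ∃ (hi : i < d), (⟨i, by omega⟩ : Fin (d + 1)) ∉ X ∧
      (⟨i + 1, by omega⟩ : Fin (d + 1)) ∈ X
  · obtain ⟨i, hi, h1, h2⟩ := hent
    exact inDeg_ge_fwd hk1 X i hi h1 h2
  · push_neg at hent
    have hdown := down X (fun j hj hx => by
      by_contra hcon
      exact (hent j hj hcon) hx)
    exfalso
    rcases hc with h0 | ⟨hlast, hne⟩
    · obtain ⟨v, hv⟩ := hX
      have : (⟨0, by omega⟩ : Fin (d + 1)) ∈ X := by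
        have := hdown v.val v.isLt (by rwa [show (⟨v.val, v.isLt⟩ : Fin (d+1)) = v from rfl])
          0 (by omega) (by omega)
        exact this
      exact h0 this
    · apply hne
      apply Finset.eq_univ_iff_forall.2
      intro v
      have hlast' : (⟨d, by omega⟩ : Fin (d + 1)) ∈ X := hlast
      have := hdown d (by omega) hlast' v.val v.isLt (by omega)
      rwa [show (⟨v.val, v.isLt⟩ : Fin (d+1)) = v from rfl] at this

end SharpAux

/-- **Sharpness of the bound.**  For all integers `k ≥ d + 1 ≥ 2` there is a digraph `D`
with `ν_f(D) = k + (d-1)/d` (the minimum over subpartitions with more than one class of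
`(∑_{X∈P} d_A^-(X))/(|P|-1)` equals `k + (d-1)/d`) which contains no `k` pairwise
arc-disjoint spanning arborescences together with a further arc-disjoint branching `F`
satisfying both `|A(F)| > ((d-1)/d)(|V|-1)` and (`F` is a spanning arborescence or `F` has a
component with at least `d` arcs). -/

theorem sharpness (k d : ℕ) (hd : 2 ≤ d + 1) (hk : d + 1 ≤ k) :
    ∃ (n m : ℕ) (tail head : Fin m → Fin n), 0 < n ∧ (∀ a, tail a ≠ head a) ∧
      (∀ P : Finset (Finset (Fin n)), IsSubpartition P → 1 < P.card →
        (k : ℚ) + ((d : ℚ) - 1) / (d : ℚ) ≤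
          (∑ X ∈ P, (inDeg tail head (Finset.univ : Finset (Fin m)) X : ℚ)) /
            ((P.card : ℚ) - 1)) ∧
      (∃ P : Finset (Finset (Fin n)), IsSubpartition P ∧ 1 < P.card ∧
        (∑ X ∈ P, (inDeg tail head (Finset.univ : Finset (Fin m)) X : ℚ)) /
            ((P.card : ℚ) - 1) = (k : ℚ) + ((d : ℚ) - 1) / (d : ℚ)) ∧
      ¬ (∃ (T : Fin k → Finset (Fin m)) (rt : Fin k → Fin n)
            (S R : Finset (Fin n)) (B : Finset (Fin m)),
          (∀ i, IsArborescence tail head Finset.univ (T i) (rt i)) ∧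
          (∀ i j, i ≠ j → Disjoint (T i) (T j)) ∧
          (∀ i, Disjoint (T i) B) ∧
          IsBranching tail head S B R ∧
          ((d : ℚ) - 1) / (d : ℚ) * ((n : ℚ) - 1) < (B.card : ℚ) ∧
          ((∃ r : Fin n, IsArborescence tail head Finset.univ B r) ∨
            ∃ r ∈ R, d ≤ (compArcs tail head B r).card)) := by
  have hd1 : 1 ≤ d := by omega
  have hk1 : 1 ≤ k := by omega
  refine ⟨d + 1, d * k + (d - 1), SharpAux.eTail k d, SharpAux.eHead k d, Nat.succ_pos d,
    SharpAux.noloop hk1, ?_, ?_, ?_⟩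
  · -- lower bound for every subpartition
    intro P hP hPcard
    have hple : P.card ≤ d + 1 := by
      have hdisj : ∀ x ∈ P, ∀ y ∈ P, x ≠ y → Disjoint (id x) (id y) :=
        fun x hx y hy hxy => hP.2 x hx y hy hxy
      have h1 : (P.biUnion id).card = ∑ X ∈ P, X.card := Finset.card_biUnion hdisj
      have h2 : (P.biUnion id).card ≤ d + 1 := by
        refine le_trans (Finset.card_le_univ _) ?_
        simp
      have h3 : P.card ≤ ∑ X ∈ P, X.card := by
        calc P.card = ∑ _X ∈ P, 1 := by simp
          _ ≤ ∑ X ∈ P, X.card := Finset.sum_le_sum (fun X hX => (hP.1 X hX).card_pos)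
      omega
    have key : (P.card - 1) * k + (d - 1) ≤
        ∑ X ∈ P, inDeg (SharpAux.eTail k d) (SharpAux.eHead k d) Finset.univ X := by
      by_cases hc : ∃ X ∈ P, (0 : Fin (d + 1)) ∈ X ∧ Fin.last d ∉ X
      · obtain ⟨X, hXP, hX0, hXd⟩ := hc
        rw [← Finset.add_sum_erase _ _ hXP]
        have hX : d - 1 ≤ inDeg (SharpAux.eTail k d) (SharpAux.eHead k d) Finset.univ X :=
          SharpAux.inDeg_ge_back hk1 X hX0 hXd
        have hrest : (P.card - 1) * k ≤
            ∑ Y ∈ P.erase X, inDeg (SharpAux.eTail k d) (SharpAux.eHead k d) Finset.univ Y := by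
          have hall : ∀ Y ∈ P.erase X,
              k ≤ inDeg (SharpAux.eTail k d) (SharpAux.eHead k d) Finset.univ Y := by
            intro Y hY
            obtain ⟨hYX, hYP⟩ := Finset.mem_erase.1 hY
            have h0Y : (0 : Fin (d + 1)) ∉ Y := fun h0Y =>
              (Finset.disjoint_left.1 (hP.2 Y hYP X hXP hYX) h0Y) hX0
            exact SharpAux.inDeg_ge_k hk1 Y (hP.1 Y hYP) (Or.inl h0Y)
          have := Finset.card_nsmul_le_sum (P.erase X) _ k hall
          rwa [Finset.card_erase_of_mem hXP, smul_eq_mul] at this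
        omega
      · push_neg at hc
        have hall : ∀ X ∈ P,
            k ≤ inDeg (SharpAux.eTail k d) (SharpAux.eHead k d) Finset.univ X := by
          intro X hX
          refine SharpAux.inDeg_ge_k hk1 X (hP.1 X hX) ?_
          by_cases h0 : (0 : Fin (d + 1)) ∈ X
          · refine Or.inr ⟨hc X hX h0, ?_⟩
            obtain ⟨Y, hYP, hYX⟩ := Finset.exists_mem_ne hPcard X
            intro huniv
            obtain ⟨v, hv⟩ := hP.1 Y hYP
            exact (Finset.disjoint_left.1 (hP.2 Y hYP X hX hYX) hv) (huniv ▸ Finset.mem_univ v)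
          · exact Or.inl h0
        have hsum : P.card * k ≤
            ∑ X ∈ P, inDeg (SharpAux.eTail k d) (SharpAux.eHead k d) Finset.univ X := by
          have h := Finset.card_nsmul_le_sum P _ k hall
          rw [smul_eq_mul] at h
          exact h
        have hmul : P.card * k = (P.card - 1) * k + k := by
          conv_lhs => rw [show P.card = (P.card - 1) + 1 by omega]
          ring
        omega
    have hp1 : (1 : ℚ) < (P.card : ℚ) := by exact_mod_cast hPcard
    rw [le_div_iff₀ (by linarith)]
    have hS : ((P.card : ℚ) - 1) * k + ((d : ℚ) - 1) ≤
        ∑ X ∈ P, (inDeg (SharpAux.eTail k d) (SharpAux.eHead k d) Finset.univ X : ℚ) := by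
      calc ((P.card : ℚ) - 1) * k + ((d : ℚ) - 1)
          = (((P.card - 1) * k + (d - 1) : ℕ) : ℚ) := by
            push_cast [Nat.cast_sub (show 1 ≤ P.card by omega), Nat.cast_sub hd1]
            ring
        _ ≤ _ := by exact_mod_cast key
    have hdq : (0 : ℚ) < (d : ℚ) := by exact_mod_cast hd1
    have hq : ((d : ℚ) - 1) / d * ((P.card : ℚ) - 1) ≤ (d : ℚ) - 1 := by
      rw [div_mul_eq_mul_div, div_le_iff₀ hdq]
      have hpd : (P.card : ℚ) ≤ (d : ℚ) + 1 := by exact_mod_cast hple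
      have hd1' : (1 : ℚ) ≤ (d : ℚ) := by exact_mod_cast hd1
      nlinarith
    calc ((k : ℚ) + ((d : ℚ) - 1) / d) * ((P.card : ℚ) - 1)
        = (k : ℚ) * ((P.card : ℚ) - 1) + ((d : ℚ) - 1) / d * ((P.card : ℚ) - 1) := by ring
      _ ≤ (k : ℚ) * ((P.card : ℚ) - 1) + ((d : ℚ) - 1) := by linarith
      _ ≤ _ := by nlinarith [hS]
  · -- the optimal subpartition: all singletons
    refine ⟨Finset.univ.image (fun v : Fin (d + 1) => ({v} : Finset (Fin (d + 1)))), ?_, ?_, ?_⟩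
    · constructor
      · intro X hX
        obtain ⟨v, -, rfl⟩ := Finset.mem_image.1 hX
        exact ⟨v, Finset.mem_singleton_self v⟩
      · intro X hX Y hY hXY
        obtain ⟨v, -, rfl⟩ := Finset.mem_image.1 hX
        obtain ⟨w, -, rfl⟩ := Finset.mem_image.1 hY
        have hvw : v ≠ w := fun h => hXY (by rw [h])
        simpa [Finset.disjoint_singleton] using hvw
    · rw [Finset.card_image_of_injective _ Finset.singleton_injective, Finset.card_univ,
        Fintype.card_fin]
      omega
    · rw [Finset.card_image_of_injective _ Finset.singleton_injective, Finset.card_univ,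
        Fintype.card_fin]
      have hsumN : ∑ X ∈ Finset.univ.image (fun v : Fin (d + 1) => ({v} : Finset (Fin (d + 1)))),
          inDeg (SharpAux.eTail k d) (SharpAux.eHead k d) Finset.univ X = d * k + (d - 1) := by
        rw [Finset.sum_image (fun x _ y _ h => Finset.singleton_injective h)]
        have hval : ∀ v : Fin (d + 1),
            inDeg (SharpAux.eTail k d) (SharpAux.eHead k d) Finset.univ {v} =
            ((Finset.univ : Finset (Fin (d * k + (d - 1)))).filter
              fun a => SharpAux.eHead k d a = v).card := by
          intro v
          unfold inDeg
          congr 1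
          ext a
          simp only [Finset.mem_filter, Finset.mem_univ, true_and, Finset.mem_singleton]
          constructor
          · exact fun h => h.2
          · intro h
            exact ⟨fun hc => SharpAux.noloop hk1 a (hc.trans h.symm), h⟩
        rw [Finset.sum_congr rfl (fun v _ => hval v)]
        have hfib := Finset.card_eq_sum_card_fiberwise (f := SharpAux.eHead k d)
          (s := (Finset.univ : Finset (Fin (d * k + (d - 1))))) (t := Finset.univ)
          (fun a _ => Finset.mem_univ _)
        rw [← hfib, Finset.card_univ, Fintype.card_fin]
      have hsum : ∑ X ∈ Finset.univ.image (fun v : Fin (d + 1) => ({v} : Finset (Fin (d + 1)))),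
          (inDeg (SharpAux.eTail k d) (SharpAux.eHead k d) Finset.univ X : ℚ)
          = ((d * k + (d - 1) : ℕ) : ℚ) := by
        rw [← Nat.cast_sum, hsumN]
      rw [hsum]
      have hd0 : (d : ℚ) ≠ 0 := Nat.cast_ne_zero.2 (by omega)
      push_cast [Nat.cast_sub hd1]
      rw [add_sub_cancel_right]
      field_simp
  · -- no packing
    rintro ⟨T, rt, S, R, B, hT, hTdisj, hTB, hBr, hBcard, -⟩
    have hcardT : ∀ i, (T i).card = d := by
      intro i
      obtain ⟨-, -, hroot, hone, -⟩ := hT i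
      have hone2 : ∀ v : Fin (d + 1), v ≠ rt i →
          ((T i).filter fun a => SharpAux.eHead k d a = v).card = 1 := by
        intro v hv
        rw [SharpAux.filter_ext (fun a => SharpAux.eHead k d a = v) _
          (fun a => Classical.propDecidable _) (T i)]
        exact hone v (Finset.mem_univ v) hv
      rw [Finset.card_eq_sum_card_fiberwise (f := SharpAux.eHead k d) (t := Finset.univ)
        (fun a _ => Finset.mem_univ _)]
      rw [← Finset.add_sum_erase _ _ (Finset.mem_univ (rt i))]
      have hz : ((T i).filter fun a => SharpAux.eHead k d a = rt i).card = 0 := by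
        rw [Finset.card_eq_zero, Finset.filter_eq_empty_iff]
        exact fun a ha => hroot a ha
      rw [hz, zero_add]
      have hone' : ∀ v ∈ Finset.univ.erase (rt i),
          ((T i).filter fun a => SharpAux.eHead k d a = v).card = 1 :=
        fun v hv => hone2 v (Finset.mem_erase.1 hv).1
      rw [Finset.sum_const_nat hone', Finset.card_erase_of_mem (Finset.mem_univ _),
        Finset.card_univ, Fintype.card_fin, mul_one]
      omega
    have hBle : B.card ≤ d - 1 := by
      have h1 : (Finset.univ.biUnion T).card = k * d := by
        rw [Finset.card_biUnion (fun i _ j _ hij => hTdisj i j hij)]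
        simp [hcardT, Finset.card_univ, mul_comm]
      have h2 : Disjoint (Finset.univ.biUnion T) B :=
        (Finset.disjoint_biUnion_left _ _ _).2 (fun i _ => hTB i)
      have h3 := Finset.card_le_univ ((Finset.univ.biUnion T) ∪ B)
      rw [Finset.card_union_of_disjoint h2, h1, Fintype.card_fin] at h3
      have hcomm : k * d = d * k := Nat.mul_comm _ _
      omega
    have hd0 : (d : ℚ) ≠ 0 := Nat.cast_ne_zero.2 (by omega)
    have hsimp : ((d : ℚ) - 1) / d * (((d + 1 : ℕ) : ℚ) - 1) = (d : ℚ) - 1 := by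
      push_cast
      rw [add_sub_cancel_right]
      exact div_mul_cancel₀ _ hd0
    rw [hsimp] at hBcard
    have hBq : (B.card : ℚ) ≤ (d : ℚ) - 1 := by
      have h4 : (B.card : ℚ) ≤ ((d - 1 : ℕ) : ℚ) := Nat.cast_le.2 hBle
      rwa [Nat.cast_sub hd1, Nat.cast_one] at h4
    linarith
end

section
/- Let D = (V, A) be a digraph, k ≥ 1 an integer, c ≤ |V| an integer, and U ⊆ V with |U| ≤ c. Then D contains k pairwise arc-disjoint spanning arborescences together with a further arc-disjoint spanning branching F with R(F) ⊇ U and |R(F)| = c if and only if for every subpartition P of V both of the following hold: (i) Σ_{X∈P} d_A^-(X) ≥ k(|P| − 1), and (ii) Σ_{X∈P} d_A^-(X) ≥ k(|P| − 1) + |{X ∈ P : X ∩ U = ∅}| − (c − |U|). -/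
/-!
Digraphs may have parallel arcs but no loops.  We model a digraph `D = (V, A)` by a finite
vertex type `V`, a finite arc type `α` and maps `tail head : α → V` with `tail a ≠ head a`.
Subdigraphs are given by their arc sets (`Finset α`) together with vertex sets (`Finset V`).
-/

attribute [local instance] Classical.propDecidable

set_option linter.unusedSectionVars false
set_option linter.unusedVariables false
set_option maxHeartbeats 1000000

section Basics

variable {V α : Type} (tail head : α → V)

lemma inDeg_mono {B C : Finset α} (h : B ⊆ C) (X : Finset V) :
    inDeg tail head B X ≤ inDeg tail head C X :=
  Finset.card_le_card (Finset.filter_subset_filter _ h)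

lemma inDeg_submod (B : Finset α) (X Y : Finset V) :
    inDeg tail head B (X ∪ Y) + inDeg tail head B (X ∩ Y)
      ≤ inDeg tail head B X + inDeg tail head B Y := by
  classical
  simp only [inDeg, Finset.card_filter]
  rw [← Finset.sum_add_distrib, ← Finset.sum_add_distrib]
  apply Finset.sum_le_sum
  intro a _
  by_cases h1 : tail a ∈ X <;> by_cases h2 : tail a ∈ Y <;>
    by_cases h3 : head a ∈ X <;> by_cases h4 : head a ∈ Y <;>
    simp [Finset.mem_union, Finset.mem_inter, h1, h2, h3, h4]

lemma reach_enter {B : Finset α} {X : Finset V} {r v : V} (hr : r ∉ X) (hv : v ∈ X)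
    (h : DiReach tail head B r v) : ∃ a ∈ B, tail a ∉ X ∧ head a ∈ X := by
  induction h with
  | refl => exact absurd hv hr
  | tail hab hstep ih =>
    rename_i b c
    obtain ⟨a, haB, hta, hha⟩ := hstep
    by_cases hb : b ∈ X
    · exact ih hb
    · exact ⟨a, haB, by rw [hta]; exact hb, by rw [hha]; exact hv⟩

lemma one_le_inDeg_of_reach {B : Finset α} {X : Finset V} {r v : V} (hr : r ∉ X)
    (hv : v ∈ X) (h : DiReach tail head B r v) : 1 ≤ inDeg tail head B X := by
  obtain ⟨a, haB, h1, h2⟩ := reach_enter tail head hr hv h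
  have : a ∈ B.filter fun a => tail a ∉ X ∧ head a ∈ X := Finset.mem_filter.2 ⟨haB, h1, h2⟩
  exact Finset.card_pos.2 ⟨a, this⟩

lemma DiReach.mono {B C : Finset α} (h : B ⊆ C) {u v : V}
    (hr : DiReach tail head B u v) : DiReach tail head C u v := by
  induction hr with
  | refl => exact Relation.ReflTransGen.refl
  | tail _ hstep ih =>
    obtain ⟨a, haB, h1, h2⟩ := hstep
    exact Relation.ReflTransGen.tail ih ⟨a, h haB, h1, h2⟩

/-- Sum of in-degrees of pairwise disjoint arc sets is at most the total in-degree. -/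
lemma sum_inDeg_le [Fintype α] {n : ℕ} (f : Fin n → Finset α)
    (hdisj : ∀ i j, i ≠ j → Disjoint (f i) (f j)) (X : Finset V) :
    ∑ i, inDeg tail head (f i) X ≤ inDeg tail head (Finset.univ : Finset α) X := by
  classical
  have hd : ∀ i ∈ (Finset.univ : Finset (Fin n)), ∀ j ∈ (Finset.univ : Finset (Fin n)),
      i ≠ j → Disjoint ((f i).filter fun a => tail a ∉ X ∧ head a ∈ X)
        ((f j).filter fun a => tail a ∉ X ∧ head a ∈ X) := by
    intro i _ j _ hij
    exact Finset.disjoint_filter_filter (hdisj i j hij)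
  rw [inDeg, show ∑ i, inDeg tail head (f i) X =
      (Finset.univ.biUnion fun i => (f i).filter fun a => tail a ∉ X ∧ head a ∈ X).card from
      (Finset.card_biUnion hd).symm]
  apply Finset.card_le_card
  intro a ha
  obtain ⟨i, _, hai⟩ := Finset.mem_biUnion.1 ha
  obtain ⟨_, h2⟩ := Finset.mem_filter.1 hai
  exact Finset.mem_filter.2 ⟨Finset.mem_univ a, h2⟩

end Basics

section Easy

variable {V α : Type} [Fintype V] [Nonempty V] [Fintype α] (tail head : α → V)

lemma card_filter_mem_le_one {P : Finset (Finset V)} (hP : IsSubpartition P) (r : V) :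
    (P.filter fun X => r ∈ X).card ≤ 1 := by
  rw [Finset.card_le_one]
  intro X hX Y hY
  rw [Finset.mem_filter] at hX hY
  by_contra hne
  exact Finset.disjoint_left.1 (hP.2 X hX.1 Y hY.1 hne) hX.2 hY.2

lemma arb_sum {P : Finset (Finset V)} (hP : IsSubpartition P) {T : Finset α} {r : V}
    (hT : IsArborescence tail head Finset.univ T r) :
    (P.card : ℤ) - 1 ≤ ∑ X ∈ P, (inDeg tail head T X : ℤ) := by
  have h1 : ∀ X ∈ P.filter fun X => r ∉ X, 1 ≤ (inDeg tail head T X : ℤ) := by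
    intro X hX
    rw [Finset.mem_filter] at hX
    obtain ⟨v, hv⟩ := hP.1 X hX.1
    exact_mod_cast one_le_inDeg_of_reach tail head hX.2 hv (hT.2.2.2.2 v (Finset.mem_univ v))
  calc (P.card : ℤ) - 1 ≤ ((P.filter fun X => r ∉ X).card : ℤ) := by
        have h1' := card_filter_mem_le_one hP r
        have hsplit := Finset.card_filter_add_card_filter_not
          (s := P) (p := fun X => r ∈ X)
        omega
    _ ≤ ∑ X ∈ P.filter fun X => r ∉ X, (inDeg tail head T X : ℤ) := by
        simpa using Finset.card_nsmul_le_sum (P.filter fun X => r ∉ X) _ 1 h1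
    _ ≤ ∑ X ∈ P, (inDeg tail head T X : ℤ) :=
        Finset.sum_le_sum_of_subset_of_nonneg (Finset.filter_subset _ _)
          (by intro i _ _; positivity)

lemma branching_sum {P : Finset (Finset V)} (hP : IsSubpartition P) {B : Finset α}
    {R : Finset V} (hB : IsBranching tail head Finset.univ B R) :
    ((P.filter fun X => X ∩ R = ∅).card : ℤ) ≤ ∑ X ∈ P, (inDeg tail head B X : ℤ) := by
  have h1 : ∀ X ∈ P.filter fun X => X ∩ R = ∅, 1 ≤ (inDeg tail head B X : ℤ) := by
    intro X hX
    rw [Finset.mem_filter] at hX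
    obtain ⟨v, hv⟩ := hP.1 X hX.1
    obtain ⟨r, hrR, hreach⟩ := hB.2.2.2.2 v (Finset.mem_univ v)
    have hr : r ∉ X := by
      intro hrX
      have : r ∈ X ∩ R := Finset.mem_inter.2 ⟨hrX, hrR⟩
      rw [hX.2] at this; exact absurd this (Finset.notMem_empty r)
    exact_mod_cast one_le_inDeg_of_reach tail head hr hv hreach
  calc ((P.filter fun X => X ∩ R = ∅).card : ℤ)
      ≤ ∑ X ∈ P.filter fun X => X ∩ R = ∅, (inDeg tail head B X : ℤ) := by
        simpa using Finset.card_nsmul_le_sum (P.filter fun X => X ∩ R = ∅) _ 1 h1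
    _ ≤ ∑ X ∈ P, (inDeg tail head B X : ℤ) :=
        Finset.sum_le_sum_of_subset_of_nonneg (Finset.filter_subset _ _)
          (by intro i _ _; positivity)

lemma count_Ufree {P : Finset (Finset V)} (hP : IsSubpartition P) {U R : Finset V}
    (hUR : U ⊆ R) {c : ℕ} (hRc : R.card = c) :
    ((P.filter fun X => X ∩ U = ∅).card : ℤ) - ((c : ℤ) - U.card) ≤
      ((P.filter fun X => X ∩ R = ∅).card : ℤ) := by
  classical
  set Q := P.filter fun X => X ∩ U = ∅ ∧ X ∩ R ≠ ∅ with hQ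
  have hQcard : Q.card ≤ (R \ U).card := by
    have hex : ∀ X : Finset V, ∃ v : V, X ∈ Q → v ∈ X ∩ (R \ U) := by
      intro X
      by_cases hX : X ∈ Q
      · rw [hQ, Finset.mem_filter] at hX
        obtain ⟨hXP, hXU, hXR⟩ := hX
        obtain ⟨v, hv⟩ := Finset.nonempty_iff_ne_empty.2 hXR
        rw [Finset.mem_inter] at hv
        refine ⟨v, fun _ => Finset.mem_inter.2 ⟨hv.1, Finset.mem_sdiff.2 ⟨hv.2, ?_⟩⟩⟩
        intro hvU
        have : v ∈ X ∩ U := Finset.mem_inter.2 ⟨hv.1, hvU⟩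
        rw [hXU] at this; exact absurd this (Finset.notMem_empty v)
      · exact ⟨Classical.arbitrary V, fun h => absurd h hX⟩
    choose f hf using hex
    apply Finset.card_le_card_of_injOn f
    · intro X hX; exact (Finset.mem_inter.1 (hf X hX)).2
    · intro X hX Y hY hfXY
      by_contra hne
      have hXP : X ∈ P := (Finset.mem_filter.1 hX).1
      have hYP : Y ∈ P := (Finset.mem_filter.1 hY).1
      have := hP.2 X hXP Y hYP hne
      exact Finset.disjoint_left.1 this (Finset.mem_inter.1 (hf X hX)).1
        (hfXY ▸ (Finset.mem_inter.1 (hf Y hY)).1)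
  have hRU : (R \ U).card = c - U.card := by rw [Finset.card_sdiff_of_subset hUR, hRc]
  have hsplit : (P.filter fun X => X ∩ U = ∅).card ≤
      (P.filter fun X => X ∩ R = ∅).card + Q.card := by
    have : (P.filter fun X => X ∩ U = ∅) ⊆
        (P.filter fun X => X ∩ R = ∅) ∪ Q := by
      intro X hX
      rw [Finset.mem_filter] at hX
      by_cases h : X ∩ R = ∅
      · exact Finset.mem_union_left _ (Finset.mem_filter.2 ⟨hX.1, h⟩)
      · exact Finset.mem_union_right _ (Finset.mem_filter.2 ⟨hX.1, hX.2, h⟩)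
    calc (P.filter fun X => X ∩ U = ∅).card ≤ _ := Finset.card_le_card this
      _ ≤ _ := Finset.card_union_le _ _
  have hUc : U.card ≤ c := hRc ▸ Finset.card_le_card hUR
  have h1 : (Q.card : ℤ) ≤ (c : ℤ) - U.card := by
    have := hQcard.trans_eq hRU
    omega
  have h2 : ((P.filter fun X => X ∩ U = ∅).card : ℤ) ≤
      ((P.filter fun X => X ∩ R = ∅).card : ℤ) + Q.card := by exact_mod_cast hsplit
  omega

end Easy

section Cover

variable {V : Type} [Fintype V] [Nonempty V]

lemma cover_subclaim (N : ℕ) (g : Finset V → ℤ)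
    (hsup : ∀ X Y : Finset V, (X ∩ Y).Nonempty → g X + g Y ≤ g (X ∩ Y) + g (X ∪ Y))
    (hbd : ∀ P : Finset (Finset V), IsSubpartition P → ∑ X ∈ P, g X ≤ (N : ℤ) + 1)
    {X₀ : Finset V} (hX₀ : X₀.Nonempty) (hgX₀ : 1 ≤ g X₀)
    (hmin : ∀ Y : Finset V, Y.Nonempty → 1 ≤ g Y → X₀.card ≤ Y.card)
    {P₁ : Finset (Finset V)} (hP₁ : IsSubpartition P₁)
    (hpos : ∀ X ∈ P₁, 1 ≤ g X) (hsum : ∑ X ∈ P₁, g X = (N : ℤ) + 1) :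
    ∃ X ∈ P₁, X₀ ⊆ X := by
  classical
  set Q := P₁.filter (fun X => (X₀ ∩ X).Nonempty) with hQdef
  by_cases hQ : Q = ∅
  · -- X₀ is disjoint from all members: add it to P₁, contradiction with the bound
    exfalso
    have hdisj : ∀ X ∈ P₁, Disjoint X₀ X := by
      intro X hX
      rw [Finset.disjoint_iff_inter_eq_empty, ← Finset.not_nonempty_iff_eq_empty]
      intro hne
      have : X ∈ Q := Finset.mem_filter.2 ⟨hX, hne⟩
      rw [hQ] at this; exact absurd this (Finset.notMem_empty X)
    have hX₀notin : X₀ ∉ P₁ := by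
      intro h
      have : X₀ ∈ Q := Finset.mem_filter.2 ⟨h, by simpa using hX₀⟩
      rw [hQ] at this; exact absurd this (Finset.notMem_empty _)
    have hP' : IsSubpartition (insert X₀ P₁) := by
      constructor
      · intro X hX
        rcases Finset.mem_insert.1 hX with h | h
        · exact h ▸ hX₀
        · exact hP₁.1 X h
      · intro X hX Y hY hne
        rcases Finset.mem_insert.1 hX with h | h <;> rcases Finset.mem_insert.1 hY with h' | h'
        · exact absurd (h.trans h'.symm) hne
        · exact h ▸ hdisj Y h'
        · exact h' ▸ (hdisj X h).symm
        · exact hP₁.2 X h Y h' hne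
    have := hbd _ hP'
    rw [Finset.sum_insert hX₀notin, hsum] at this
    linarith
  · by_cases hQ1 : ∃ X ∈ Q, 1 ≤ g (X₀ ∩ X)
    · obtain ⟨X, hXQ, hgx⟩ := hQ1
      have hXP₁ : X ∈ P₁ := (Finset.mem_filter.1 hXQ).1
      have hne : (X₀ ∩ X).Nonempty := (Finset.mem_filter.1 hXQ).2
      have hcard := hmin _ hne hgx
      have heq : X₀ ∩ X = X₀ :=
        Finset.eq_of_subset_of_card_le Finset.inter_subset_left hcard
      exact ⟨X, hXP₁, heq ▸ Finset.inter_subset_right⟩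
    · -- all intersections with X₀ have g ≤ 0 : build the big union, contradiction
      exfalso
      push_neg at hQ1
      have hQ0 : ∀ X ∈ Q, g (X₀ ∩ X) ≤ 0 := fun X hX => by
        have := hQ1 X hX; omega
      have chain : ∀ Q' : Finset (Finset V), Q' ⊆ Q →
          g X₀ + ∑ X ∈ Q', g X ≤ g (X₀ ∪ Q'.sup id) := by
        intro Q'
        induction Q' using Finset.induction_on with
        | empty => intro _; simp
        | @insert X Q'' hXQ'' ih =>
          intro hsub
          have hsub'' : Q'' ⊆ Q := (Finset.subset_insert _ _).trans hsub
          have hXQ : X ∈ Q := hsub (Finset.mem_insert_self _ _)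
          have hXP₁ : X ∈ P₁ := (Finset.mem_filter.1 hXQ).1
          have hX₀X : (X₀ ∩ X).Nonempty := (Finset.mem_filter.1 hXQ).2
          set Z := X₀ ∪ Q''.sup id with hZ
          have hZXint : Z ∩ X = X₀ ∩ X := by
            rw [hZ, Finset.union_inter_distrib_right]
            have hememp : Q''.sup id ∩ X = ∅ := by
              rw [← Finset.disjoint_iff_inter_eq_empty, Finset.disjoint_left]
              intro v hv hvX
              rw [Finset.mem_sup] at hv
              obtain ⟨Y, hYQ'', hvY⟩ := hv
              have hYP₁ : Y ∈ P₁ := (Finset.mem_filter.1 (hsub'' hYQ'')).1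
              have hYX : Y ≠ X := fun h => hXQ'' (h ▸ hYQ'')
              exact Finset.disjoint_left.1 (hP₁.2 Y hYP₁ X hXP₁ hYX) hvY hvX
            rw [hememp, Finset.union_empty]
          have hZint : (Z ∩ X).Nonempty := hZXint ▸ hX₀X
          have h1 := hsup Z X hZint
          have h2 : Z ∪ X = X₀ ∪ (insert X Q'').sup id := by
            rw [Finset.sup_insert, hZ]
            ext v
            simp only [Finset.mem_union, Finset.sup_eq_union, id_eq, Finset.mem_inter]
            tauto
          rw [hZXint, h2] at h1
          have h3 := hQ0 X hXQ
          have h4 := ih hsub''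
          rw [Finset.sum_insert hXQ'']
          linarith
      have hQne : Q.Nonempty := Finset.nonempty_iff_ne_empty.2 hQ
      set Z := X₀ ∪ Q.sup id with hZdef
      have hgZ : g X₀ + ∑ X ∈ Q, g X ≤ g Z := chain Q Finset.Subset.rfl
      set Qc := P₁.filter (fun X => ¬ (X₀ ∩ X).Nonempty) with hQc
      have hsplit : ∑ X ∈ Q, g X + ∑ X ∈ Qc, g X = ∑ X ∈ P₁, g X :=
        Finset.sum_filter_add_sum_filter_not P₁ _ g
      have hX₀Z : X₀ ⊆ Z := Finset.subset_union_left
      have hZnotin : Z ∉ Qc := by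
        intro h
        exact (Finset.mem_filter.1 h).2 (hX₀.mono (Finset.subset_inter
          (Finset.Subset.refl X₀) hX₀Z))
      have hP' : IsSubpartition (insert Z Qc) := by
        have hdisjZ : ∀ Y ∈ Qc, Disjoint Z Y := by
          intro Y hY
          rw [hQc, Finset.mem_filter] at hY
          have hYd : Disjoint X₀ Y := by
            rw [Finset.disjoint_iff_inter_eq_empty, ← Finset.not_nonempty_iff_eq_empty]
            exact hY.2
          rw [hZdef]
          apply Finset.disjoint_union_left.2
          refine ⟨hYd, ?_⟩
          rw [Finset.disjoint_left]
          intro v hv hvY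
          rw [Finset.mem_sup] at hv
          obtain ⟨X, hXQ, hvX⟩ := hv
          have hXP₁ : X ∈ P₁ := (Finset.mem_filter.1 hXQ).1
          have hXY : X ≠ Y := by
            intro h
            exact hY.2 (h ▸ (Finset.mem_filter.1 hXQ).2)
          exact Finset.disjoint_left.1 (hP₁.2 X hXP₁ Y hY.1 hXY) hvX hvY
        constructor
        · intro X hX
          rcases Finset.mem_insert.1 hX with h | h
          · exact h ▸ hX₀.mono hX₀Z
          · exact hP₁.1 X (Finset.mem_filter.1 h).1
        · intro X hX Y hY hne
          rcases Finset.mem_insert.1 hX with h | h <;> rcases Finset.mem_insert.1 hY with h' | h'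
          · exact absurd (h.trans h'.symm) hne
          · exact h ▸ hdisjZ Y h'
          · exact h' ▸ (hdisjZ X h).symm
          · exact hP₁.2 X (Finset.mem_filter.1 h).1 Y (Finset.mem_filter.1 h').1 hne
      have hb := hbd _ hP'
      rw [Finset.sum_insert hZnotin] at hb
      linarith

lemma cover (N : ℕ) (g : Finset V → ℤ)
    (hsup : ∀ X Y : Finset V, (X ∩ Y).Nonempty → g X + g Y ≤ g (X ∩ Y) + g (X ∪ Y))
    (hbd : ∀ P : Finset (Finset V), IsSubpartition P → ∑ X ∈ P, g X ≤ (N : ℤ)) :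
    ∃ M : Multiset V, Multiset.card M = N ∧
      ∀ X : Finset V, X.Nonempty → g X ≤ ((M.filter (· ∈ X)).card : ℤ) := by
  classical
  induction N generalizing g with
  | zero =>
    refine ⟨0, rfl, fun X hX => ?_⟩
    have := hbd {X} ⟨fun Y hY => (Finset.mem_singleton.1 hY) ▸ hX,
      fun Y hY Z hZ hne => absurd ((Finset.mem_singleton.1 hY).trans
        (Finset.mem_singleton.1 hZ).symm) hne⟩
    simpa using this
  | succ N ih =>
    by_cases hdef : ∃ X : Finset V, X.Nonempty ∧ 1 ≤ g X
    · -- take minimum-cardinality deficient set, put a point in it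
      set D := Finset.univ.filter (fun X : Finset V => X.Nonempty ∧ 1 ≤ g X) with hD
      have hDne : D.Nonempty := by
        obtain ⟨X, hX1, hX2⟩ := hdef
        exact ⟨X, Finset.mem_filter.2 ⟨Finset.mem_univ X, hX1, hX2⟩⟩
      obtain ⟨X₀, hX₀D, hX₀min⟩ := D.exists_min_image Finset.card hDne
      have hX₀ : X₀.Nonempty := (Finset.mem_filter.1 hX₀D).2.1
      have hgX₀ : 1 ≤ g X₀ := (Finset.mem_filter.1 hX₀D).2.2
      have hmin : ∀ Y : Finset V, Y.Nonempty → 1 ≤ g Y → X₀.card ≤ Y.card := by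
        intro Y h1 h2
        exact hX₀min Y (Finset.mem_filter.2 ⟨Finset.mem_univ Y, h1, h2⟩)
      obtain ⟨v, hv⟩ := hX₀
      set g' : Finset V → ℤ := fun X => g X - (if v ∈ X then 1 else 0) with hg'
      have hsup' : ∀ X Y : Finset V, (X ∩ Y).Nonempty →
          g' X + g' Y ≤ g' (X ∩ Y) + g' (X ∪ Y) := by
        intro X Y hXY
        have := hsup X Y hXY
        simp only [hg']
        by_cases h1 : v ∈ X <;> by_cases h2 : v ∈ Y <;>
          simp [Finset.mem_inter, Finset.mem_union, h1, h2] <;> linarith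
      have hbd' : ∀ P : Finset (Finset V), IsSubpartition P → ∑ X ∈ P, g' X ≤ (N : ℤ) := by
        intro P hP
        set P₁ := P.filter (fun X => 1 ≤ g' X) with hP₁def
        have hP₁ : IsSubpartition P₁ :=
          ⟨fun X hX => hP.1 X (Finset.mem_filter.1 hX).1,
           fun X hX Y hY => hP.2 X (Finset.mem_filter.1 hX).1 Y (Finset.mem_filter.1 hY).1⟩
        have hstep : ∑ X ∈ P, g' X ≤ ∑ X ∈ P₁, g' X := by
          have := Finset.sum_filter_add_sum_filter_not P (fun X => 1 ≤ g' X) g'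
          have hle : ∑ X ∈ P.filter (fun X => ¬ 1 ≤ g' X), g' X ≤ 0 :=
            Finset.sum_nonpos (fun X hX => by
              have := (Finset.mem_filter.1 hX).2; omega)
          linarith
        have hpos : ∀ X ∈ P₁, 1 ≤ g X := by
          intro X hX
          have h := (Finset.mem_filter.1 hX).2
          have : g' X ≤ g X := by simp only [hg']; split <;> omega
          omega
        refine hstep.trans ?_
        by_cases hvP : ∃ X ∈ P₁, v ∈ X
        · obtain ⟨Xv, hXv, hvXv⟩ := hvP
          have h1 : ∑ X ∈ P₁, g' X ≤ (∑ X ∈ P₁, g X) - 1 := by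
            have hsplit : ∑ X ∈ P₁, g' X =
                (∑ X ∈ P₁, g X) - ∑ X ∈ P₁, (if v ∈ X then (1:ℤ) else 0) := by
              rw [← Finset.sum_sub_distrib]
            have hone : (1:ℤ) ≤ ∑ X ∈ P₁, (if v ∈ X then (1:ℤ) else 0) := by
              have : ∀ X ∈ P₁, (0:ℤ) ≤ (if v ∈ X then (1:ℤ) else 0) := by
                intro X _; split <;> omega
              calc (1:ℤ) = (if v ∈ Xv then (1:ℤ) else 0) := by rw [if_pos hvXv]
                _ ≤ _ := Finset.single_le_sum this hXv
            rw [hsplit]; linarith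
          have := hbd P₁ hP₁
          push_cast at this ⊢
          linarith
        · -- no member contains v : show the sum of g over P₁ is at most N
          push_neg at hvP
          have heq : ∑ X ∈ P₁, g' X = ∑ X ∈ P₁, g X := by
            apply Finset.sum_congr rfl
            intro X hX
            simp only [hg', if_neg (hvP X hX), sub_zero]
          rw [heq]
          by_contra hcon
          push_neg at hcon
          have hle := hbd P₁ hP₁
          have hsum : ∑ X ∈ P₁, g X = (N : ℤ) + 1 := by push_cast at hle; omega
          obtain ⟨X, hXP₁, hX₀X⟩ :=
            cover_subclaim N g hsup (fun P hP => by have := hbd P hP; push_cast at this; omega)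
              ⟨v, hv⟩ hgX₀ hmin hP₁ hpos hsum
          exact hvP X hXP₁ (hX₀X hv)
      obtain ⟨M', hM'card, hM'⟩ := ih g' hsup' hbd'
      refine ⟨v ::ₘ M', by simp [hM'card], ?_⟩
      intro X hX
      have h1 := hM' X hX
      have h2 : ((v ::ₘ M').filter (· ∈ X)).card =
          (M'.filter (· ∈ X)).card + (if v ∈ X then 1 else 0) := by
        rw [Multiset.filter_cons]
        split <;> simp
      have : g X - (if v ∈ X then 1 else 0) ≤ ((M'.filter (· ∈ X)).card : ℤ) := h1
      rw [h2]
      by_cases hvX : v ∈ X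
      · rw [if_pos hvX] at this ⊢; push_cast; omega
      · rw [if_neg hvX] at this ⊢; push_cast; omega
    · -- no deficient set at all
      push_neg at hdef
      refine ⟨Multiset.replicate (N + 1) (Classical.arbitrary V), by simp, ?_⟩
      intro X hX
      have : g X ≤ 0 := by
        by_contra h
        push_neg at h
        exact absurd h.le (by have := hdef X hX; omega)
      have h0 : (0:ℤ) ≤ ((Multiset.filter (· ∈ X) (Multiset.replicate (N+1)
        (Classical.arbitrary V))).card : ℤ) := by positivity
      omega

end Cover

section Shrink

variable {V : Type} [Fintype V] [Nonempty V]

/-- count of a multiset inside a finset, as the card of a filter -/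
noncomputable def mcnt (M : Multiset V) (X : Finset V) : ℕ := (M.filter (· ∈ X)).card

lemma mcnt_modular (M : Multiset V) (X Y : Finset V) :
    mcnt M (X ∪ Y) + mcnt M (X ∩ Y) = mcnt M X + mcnt M Y := by
  classical
  unfold mcnt
  have h1 : Multiset.filter (· ∈ X ∪ Y) M = Multiset.filter (fun a => a ∈ X ∨ a ∈ Y) M := by
    apply Multiset.filter_congr; intro a _; simp [Finset.mem_union]
  have h2 : Multiset.filter (· ∈ X ∩ Y) M = Multiset.filter (fun a => a ∈ X ∧ a ∈ Y) M := by
    apply Multiset.filter_congr; intro a _; simp [Finset.mem_inter]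
  rw [← Multiset.card_add, ← Multiset.card_add, h1, h2, ← Multiset.filter_add_filter]

lemma mcnt_cons (u : V) (M : Multiset V) (X : Finset V) :
    mcnt (u ::ₘ M) X = mcnt M X + (if u ∈ X then 1 else 0) := by
  unfold mcnt
  rw [Multiset.filter_cons]
  split <;> simp

lemma shrink (d : Finset V → ℕ) (k : ℕ)
    (hsub : ∀ X Y : Finset V, d (X ∪ Y) + d (X ∩ Y) ≤ d X + d Y)
    (hbd : ∀ P : Finset (Finset V), IsSubpartition P →
      ∑ X ∈ P, ((k:ℤ) - d X) ≤ (k:ℤ)) :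
    ∀ (n : ℕ) (M : Multiset V), Multiset.card M = k + n →
    (∀ X : Finset V, X.Nonempty → (k:ℤ) - d X ≤ (mcnt M X : ℤ)) →
    ∃ M' : Multiset V, M' ≤ M ∧ Multiset.card M' = k ∧
      ∀ X : Finset V, X.Nonempty → (k:ℤ) - d X ≤ (mcnt M' X : ℤ) := by
  intro n
  induction n with
  | zero => intro M hcard hcov; exact ⟨M, le_refl M, by omega, hcov⟩
  | succ n ih =>
    intro M hcard hcov
    -- find a removable element u ∈ M
    have hrem : ∃ u ∈ M, ∀ X : Finset V, X.Nonempty →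
        (k:ℤ) - d X ≤ (mcnt (M.erase u) X : ℤ) := by
      by_contra hcon
      push_neg at hcon
      -- every u ∈ M lies in a "tight" set
      have htight : ∀ u : V, ∃ Xu : Finset V, u ∈ M →
          Xu.Nonempty ∧ u ∈ Xu ∧ (mcnt M Xu : ℤ) = (k:ℤ) - d Xu := by
        intro u
        by_cases hu : u ∈ M
        swap
        · exact ⟨∅, fun h => absurd h hu⟩
        obtain ⟨X, hXne, hX⟩ := hcon u hu
        have heq : u ::ₘ M.erase u = M := Multiset.cons_erase hu
        have hcnt : mcnt M X = mcnt (M.erase u) X + (if u ∈ X then 1 else 0) := by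
          conv_lhs => rw [← heq]
          exact mcnt_cons u (M.erase u) X
        have hcovX := hcov X hXne
        refine ⟨X, fun _ => ⟨hXne, ?_, ?_⟩⟩
        · by_contra huX
          rw [if_neg huX, add_zero] at hcnt
          rw [hcnt] at hcovX
          omega
        · by_cases huX : u ∈ X
          · rw [if_pos huX] at hcnt; omega
          · rw [if_neg huX, add_zero] at hcnt; rw [hcnt] at hcovX; omega
      choose Xu hXu using htight
      -- for each u pick a maximum-cardinality tight set containing u
      set T : Finset V → Prop :=
        fun X => X.Nonempty ∧ (mcnt M X : ℤ) = (k:ℤ) - d X with hT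
      have hZ : ∀ u : V, ∃ Z : Finset V, u ∈ M →
          (T Z ∧ u ∈ Z ∧ ∀ Y : Finset V, T Y → u ∈ Y → Y.card ≤ Z.card) := by
        intro u
        by_cases hu : u ∈ M
        swap
        · exact ⟨∅, fun h => absurd h hu⟩
        set Du := Finset.univ.filter (fun X : Finset V => T X ∧ u ∈ X) with hDu
        have hDune : Du.Nonempty := by
          obtain ⟨h1, h2, h3⟩ := hXu u hu
          exact ⟨Xu u, Finset.mem_filter.2 ⟨Finset.mem_univ _, ⟨h1, h3⟩, h2⟩⟩
        obtain ⟨Z, hZD, hZmax⟩ := Du.exists_max_image Finset.card hDune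
        rw [hDu, Finset.mem_filter] at hZD
        refine ⟨Z, fun _ => ⟨hZD.2.1, hZD.2.2, ?_⟩⟩
        intro Y hTY huY
        exact hZmax Y (Finset.mem_filter.2 ⟨Finset.mem_univ _, hTY, huY⟩)
      choose Z hZp using hZ
      -- the maximal tight sets for elements of M are equal or disjoint
      have hZeqd : ∀ u ∈ M, ∀ w ∈ M, Z u = Z w ∨ Disjoint (Z u) (Z w) := by
        intro u hu w hw
        obtain ⟨hTu, huZ, hmaxu⟩ := hZp u hu
        obtain ⟨hTw, hwZ, hmaxw⟩ := hZp w hw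
        by_cases hint : (Z u ∩ Z w).Nonempty
        swap
        · exact Or.inr (Finset.disjoint_iff_inter_eq_empty.2
            (Finset.not_nonempty_iff_eq_empty.1 hint))
        left
        have hunion : (Z u ∪ Z w).Nonempty := hTu.1.mono Finset.subset_union_left
        have hm := mcnt_modular M (Z u) (Z w)
        have hsubm := hsub (Z u) (Z w)
        have hc1 := hcov _ hunion
        have hc2 := hcov _ hint
        have hTun : T (Z u ∪ Z w) := by
          refine ⟨hunion, ?_⟩
          have ht1 := hTu.2
          have ht2 := hTw.2
          omega
        have h1 : (Z u ∪ Z w).card ≤ (Z u).card := hmaxu _ hTun (Finset.mem_union_left _ huZ)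
        have h2 : (Z u ∪ Z w).card ≤ (Z w).card := hmaxw _ hTun (Finset.mem_union_right _ hwZ)
        have e1 : Z u ∪ Z w = Z u :=
          (Finset.eq_of_subset_of_card_le Finset.subset_union_left h1).symm
        have e2 : Z u ∪ Z w = Z w :=
          (Finset.eq_of_subset_of_card_le Finset.subset_union_right h2).symm
        exact e1.symm.trans e2
      -- form the subpartition of these maximal tight sets
      set P := M.toFinset.image Z with hP
      have hPsub : IsSubpartition P := by
        constructor
        · intro X hX
          obtain ⟨u, hu, rfl⟩ := Finset.mem_image.1 hX
          exact (hZp u (Multiset.mem_toFinset.1 hu)).1.1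
        · intro X hX Y hY hne
          obtain ⟨u, hu, rfl⟩ := Finset.mem_image.1 hX
          obtain ⟨w, hw, rfl⟩ := Finset.mem_image.1 hY
          rcases hZeqd u (Multiset.mem_toFinset.1 hu) w (Multiset.mem_toFinset.1 hw) with h | h
          · exact absurd h hne
          · exact h
      -- sum of counts over P equals count in the union, which is all of M
      have hsum : ∀ Q : Finset (Finset V), (∀ X ∈ Q, ∀ Y ∈ Q, X ≠ Y → Disjoint X Y) →
          ∑ X ∈ Q, (mcnt M X : ℤ) = (mcnt M (Q.sup id) : ℤ) := by
        intro Q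
        induction Q using Finset.induction_on with
        | empty =>
          intro _
          simp only [Finset.sum_empty, Finset.sup_empty]
          unfold mcnt
          norm_cast
          rw [eq_comm, Multiset.card_eq_zero, Multiset.filter_eq_nil]
          intro a _ h
          simp at h
        | @insert X Q' hXQ' ih2 =>
          intro hdisj
          have hd : ∀ Y ∈ Q', ∀ Z ∈ Q', Y ≠ Z → Disjoint Y Z := by
            intro Y hY Z hZ
            exact hdisj Y (Finset.mem_insert_of_mem hY) Z (Finset.mem_insert_of_mem hZ)
          rw [Finset.sum_insert hXQ', ih2 hd, Finset.sup_insert]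
          have hm := mcnt_modular M X (Q'.sup id)
          have hint : mcnt M (X ∩ Q'.sup id) = 0 := by
            unfold mcnt
            rw [Multiset.card_eq_zero, Multiset.filter_eq_nil]
            intro a _ ha
            rw [Finset.mem_inter, Finset.mem_sup] at ha
            obtain ⟨haX, Y, hYQ', haY⟩ := ha
            have hXY : X ≠ Y := fun h => hXQ' (h ▸ hYQ')
            exact Finset.disjoint_left.1
              (hdisj X (Finset.mem_insert_self _ _) Y (Finset.mem_insert_of_mem hYQ') hXY)
              haX haY
          have hid : (id X ⊔ Q'.sup id : Finset V) = X ∪ Q'.sup id := by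
            simp [Finset.sup_eq_union]
          rw [hid]
          push_cast
          omega
      have hsumP := hsum P hPsub.2
      have hfull : mcnt M (P.sup id) = Multiset.card M := by
        unfold mcnt
        have : M.filter (· ∈ P.sup id) = M := by
          rw [Multiset.filter_eq_self]
          intro u hu
          rw [Finset.mem_sup]
          exact ⟨Z u, Finset.mem_image_of_mem Z (Multiset.mem_toFinset.2 hu), (hZp u hu).2.1⟩
        rw [this]
      have htightsum : ∑ X ∈ P, ((k:ℤ) - d X) = ∑ X ∈ P, (mcnt M X : ℤ) := by
        apply Finset.sum_congr rfl
        intro X hX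
        obtain ⟨u, hu, rfl⟩ := Finset.mem_image.1 hX
        exact ((hZp u (Multiset.mem_toFinset.1 hu)).1.2).symm
      have hbdP := hbd P hPsub
      rw [htightsum, hsumP, hfull] at hbdP
      omega
    obtain ⟨u, huM, hucov⟩ := hrem
    have hcard' : Multiset.card (M.erase u) = k + n := by
      have hc := congrArg Multiset.card (Multiset.cons_erase huM)
      rw [Multiset.card_cons] at hc
      omega
    obtain ⟨M', h1, h2, h3⟩ := ih (M.erase u) hcard' hucov
    exact ⟨M', h1.trans (Multiset.erase_le u M), h2, h3⟩

end Shrink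

section Grow

variable {V α : Type} [Fintype V] [Nonempty V] [Fintype α] (tail head : α → V)

lemma inDeg_submod' (B : Finset α) (X Y : Finset V) :
    inDeg tail head B (X ∪ Y) + inDeg tail head B (X ∩ Y)
      ≤ inDeg tail head B X + inDeg tail head B Y := by
  classical
  simp only [inDeg, Finset.card_filter]
  rw [← Finset.sum_add_distrib, ← Finset.sum_add_distrib]
  apply Finset.sum_le_sum
  intro a _
  by_cases h1 : tail a ∈ X <;> by_cases h2 : tail a ∈ Y <;>
    by_cases h3 : head a ∈ X <;> by_cases h4 : head a ∈ Y <;>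
    simp [Finset.mem_union, Finset.mem_inter, h1, h2, h3, h4]

lemma DiReach.mono' {B C : Finset α} (h : B ⊆ C) {u v : V}
    (hr : DiReach tail head B u v) : DiReach tail head C u v := by
  induction hr with
  | refl => exact Relation.ReflTransGen.refl
  | tail _ hstep ih =>
    obtain ⟨a, haB, h1, h2⟩ := hstep
    exact Relation.ReflTransGen.tail ih ⟨a, h haB, h1, h2⟩

lemma extend_branching {S : Finset V} {F : Finset α} {R₀ : Finset V} {a : α}
    (hBr : IsBranching tail head S F R₀) (hta : tail a ∈ S) (hha : head a ∉ S) :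
    IsBranching tail head (insert (head a) S) (insert a F) R₀ := by
  obtain ⟨h1, h2, h3, h4, h5⟩ := hBr
  have haF : a ∉ F := fun h => hha (h2 a h).2
  refine ⟨h1.trans (Finset.subset_insert _ _), ?_, ?_, ?_, ?_⟩
  · intro b hb
    rcases Finset.mem_insert.1 hb with rfl | hb
    · exact ⟨Finset.mem_insert_of_mem hta, Finset.mem_insert_self _ _⟩
    · exact ⟨Finset.mem_insert_of_mem (h2 b hb).1, Finset.mem_insert_of_mem (h2 b hb).2⟩
  · intro r hr b hb
    rcases Finset.mem_insert.1 hb with rfl | hb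
    · exact fun h => hha (h ▸ h1 hr)
    · exact h3 r hr b hb
  · intro v hv hvR
    rcases Finset.mem_insert.1 hv with rfl | hvS
    · have hfe : F.filter (fun b => head b = head a) = ∅ := by
        rw [Finset.filter_eq_empty_iff]
        intro b hb h
        exact hha (h ▸ (h2 b hb).2)
      rw [Finset.filter_insert, if_pos rfl, hfe]
      simp
    · have hne : head a ≠ v := fun h => hha (h ▸ hvS)
      rw [Finset.filter_insert, if_neg hne]
      exact h4 v hvS hvR
  · intro v hv
    rcases Finset.mem_insert.1 hv with rfl | hvS
    · obtain ⟨r, hr, hre⟩ := h5 (tail a) hta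
      exact ⟨r, hr, Relation.ReflTransGen.tail
        (DiReach.mono' tail head (Finset.subset_insert a F) hre)
        ⟨a, Finset.mem_insert_self _ _, rfl, rfl⟩⟩
    · obtain ⟨r, hr, hre⟩ := h5 v hvS
      exact ⟨r, hr, DiReach.mono' tail head (Finset.subset_insert a F) hre⟩

lemma grow_aux (A : Finset α) (R₀ : Finset V) (p : Finset V → ℕ)
    (hmono : ∀ X Y : Finset V, X ⊆ Y → p Y ≤ p X)
    (hsup : ∀ X Y : Finset V, (X ∩ Y).Nonempty → p X + p Y ≤ p (X ∩ Y) + p (X ∪ Y))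
    (hcond : ∀ X : Finset V, X.Nonempty →
      p X + (if R₀ ∩ X = ∅ then 1 else 0) ≤ inDeg tail head A X) :
    ∀ (n : ℕ) (S : Finset V) (F : Finset α), ((Finset.univ : Finset V) \ S).card = n →
      F ⊆ A → IsBranching tail head S F R₀ →
      (∀ X : Finset V, X.Nonempty → p X ≤ inDeg tail head (A \ F) X) →
      ∃ B : Finset α, B ⊆ A ∧ IsBranching tail head Finset.univ B R₀ ∧
        ∀ X : Finset V, X.Nonempty → p X ≤ inDeg tail head (A \ B) X := by
  intro n
  induction n with
  | zero =>
    intro S F hn hFA hBr hinv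
    have hS : S = Finset.univ := by
      have : (Finset.univ : Finset V) \ S = ∅ := Finset.card_eq_zero.1 hn
      have h2 := Finset.sdiff_eq_empty_iff_subset.1 this
      exact Finset.eq_univ_of_forall (fun v => h2 (Finset.mem_univ v))
    exact ⟨F, hFA, hS ▸ hBr, hinv⟩
  | succ n ih =>
    intro S F hn hFA hBr hinv
    have hRS : R₀ ⊆ S := hBr.1
    have hheads : ∀ b ∈ F, head b ∈ S := fun b hb => (hBr.2.1 b hb).2
    have hSVne : ((Finset.univ : Finset V) \ S).Nonempty :=
      Finset.card_pos.1 (by omega)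
    -- arcs entering a set disjoint from S survive in A \ F
    have hpres : ∀ X : Finset V, X ∩ S = ∅ →
        inDeg tail head A X ≤ inDeg tail head (A \ F) X := by
      intro X hXS
      apply Finset.card_le_card
      intro b hb
      rw [Finset.mem_filter] at hb ⊢
      refine ⟨Finset.mem_sdiff.2 ⟨hb.1, fun hbF => ?_⟩, hb.2⟩
      have : head b ∈ X ∩ S := Finset.mem_inter.2 ⟨hb.2.2, hheads b hbF⟩
      rw [hXS] at this
      exact absurd this (Finset.notMem_empty _)
    -- removing one arc decreases inDeg by at most its contribution
    have hkey : ∀ (a : α) (X : Finset V), a ∉ F → inDeg tail head (A \ F) X ≤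
        inDeg tail head (A \ insert a F) X + (if tail a ∉ X ∧ head a ∈ X then 1 else 0) := by
      intro a X _
      have hset : A \ insert a F = (A \ F).erase a := by
        ext b
        simp only [Finset.mem_sdiff, Finset.mem_erase, Finset.mem_insert]
        tauto
      rw [hset, inDeg, inDeg, Finset.filter_erase]
      by_cases hpa : tail a ∉ X ∧ head a ∈ X
      · rw [if_pos hpa]
        have := Finset.pred_card_le_card_erase
          (s := (A \ F).filter fun b => tail b ∉ X ∧ head b ∈ X) (a := a)
        omega
      · rw [if_neg hpa]
        have hnm : a ∉ (A \ F).filter (fun b => tail b ∉ X ∧ head b ∈ X) :=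
          fun h => hpa (Finset.mem_filter.1 h).2
        rw [Finset.erase_eq_of_notMem hnm]
        omega
    -- existence of a safe arc from S to V \ S
    have hsafe : ∃ a : α, a ∈ A ∧ a ∉ F ∧ tail a ∈ S ∧ head a ∉ S ∧
        (∀ X : Finset V, X.Nonempty → p X ≤ inDeg tail head (A \ insert a F) X) := by
      set Tset := Finset.univ.filter (fun X : Finset V =>
        X.Nonempty ∧ ¬ X ⊆ S ∧ inDeg tail head (A \ F) X = p X) with hTdef
      -- a violated set after removing a candidate arc must be in Tset
      have hviol : ∀ a : α, a ∈ A → a ∉ F → head a ∉ S →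
          (¬ ∀ X : Finset V, X.Nonempty → p X ≤ inDeg tail head (A \ insert a F) X) →
          ∃ X ∈ Tset, tail a ∉ X ∧ head a ∈ X := by
        intro a haA haF hhaS hviol
        push_neg at hviol
        obtain ⟨X, hXne, hXlt⟩ := hviol
        have h1 := hkey a X haF
        have h2 := hinv X hXne
        have henter : tail a ∉ X ∧ head a ∈ X := by
          by_contra h
          rw [if_neg h] at h1
          omega
        have htight : inDeg tail head (A \ F) X = p X := by
          rw [if_pos henter] at h1
          omega
        have hnsub : ¬ X ⊆ S := fun h => hhaS (h henter.2)
        exact ⟨X, Finset.mem_filter.2 ⟨Finset.mem_univ _, hXne, hnsub, htight⟩, henter⟩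
      by_cases hT : Tset = ∅
      · -- no tight sets: any arc from S to V \ S works
        have hRdisj : R₀ ∩ (Finset.univ \ S) = ∅ := by
          rw [← Finset.disjoint_iff_inter_eq_empty, Finset.disjoint_right]
          intro v hv
          exact fun hvR => (Finset.mem_sdiff.1 hv).2 (hRS hvR)
        have hc := hcond _ hSVne
        rw [if_pos hRdisj] at hc
        have hp := hpres (Finset.univ \ S) (by
          rw [← Finset.disjoint_iff_inter_eq_empty]
          exact Finset.sdiff_disjoint)
        have h1 : 1 ≤ inDeg tail head (A \ F) (Finset.univ \ S) := by omega
        have : ∃ a, a ∈ (A \ F).filter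
            (fun b => tail b ∉ Finset.univ \ S ∧ head b ∈ Finset.univ \ S) := by
          rw [← Finset.card_pos] at *
          exact Finset.card_pos.1 (by rw [inDeg] at h1; omega)
        obtain ⟨a, ha⟩ := this
        rw [Finset.mem_filter, Finset.mem_sdiff] at ha
        obtain ⟨⟨haA, haF⟩, hta, hha⟩ := ha
        have htaS : tail a ∈ S := by
          by_contra h
          exact hta (Finset.mem_sdiff.2 ⟨Finset.mem_univ _, h⟩)
        have hhaS : head a ∉ S := (Finset.mem_sdiff.1 hha).2
        refine ⟨a, haA, haF, htaS, hhaS, ?_⟩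
        by_contra hsafe
        obtain ⟨X, hXT, _⟩ := hviol a haA haF hhaS hsafe
        rw [hT] at hXT
        exact absurd hXT (Finset.notMem_empty _)
      · -- take a minimum-cardinality tight set X* not inside S
        have hTne : Tset.Nonempty := Finset.nonempty_iff_ne_empty.2 hT
        obtain ⟨Xs, hXsT, hXsmin⟩ := Tset.exists_min_image Finset.card hTne
        obtain ⟨_, hXsne, hXsnS, hXstight⟩ := Finset.mem_filter.1 hXsT
        -- there is an arc of A \ F from Xs ∩ S to Xs \ S
        have harc : ∃ a : α, (a ∈ A ∧ a ∉ F) ∧ tail a ∈ Xs ∩ S ∧ head a ∈ Xs \ S := by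
          by_contra hno
          push_neg at hno
          have hsub2 : (A \ F).filter (fun b => tail b ∉ Xs \ S ∧ head b ∈ Xs \ S) ⊆
              (A \ F).filter (fun b => tail b ∉ Xs ∧ head b ∈ Xs) := by
            intro b hb
            rw [Finset.mem_filter] at hb ⊢
            obtain ⟨hbAF, hbt, hbh⟩ := hb
            refine ⟨hbAF, ?_, (Finset.mem_sdiff.1 hbh).1⟩
            intro hbtX
            have hbtS : tail b ∈ S := by
              by_contra h
              exact hbt (Finset.mem_sdiff.2 ⟨hbtX, h⟩)
            have := Finset.mem_sdiff.1 hbAF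
            exact absurd hbh (by
              have := hno b ⟨this.1, this.2⟩ (Finset.mem_inter.2 ⟨hbtX, hbtS⟩)
              exact this)
          have hle : inDeg tail head (A \ F) (Xs \ S) ≤ inDeg tail head (A \ F) Xs :=
            Finset.card_le_card hsub2
          have hXSne : (Xs \ S).Nonempty := by
            rw [Finset.sdiff_nonempty]; exact hXsnS
          have h2 : p Xs ≤ p (Xs \ S) := hmono _ _ (Finset.sdiff_subset)
          have h3 : p (Xs \ S) ≤ inDeg tail head (A \ F) (Xs \ S) := hinv _ hXSne
          have htight2 : Xs \ S ∈ Tset := by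
            refine Finset.mem_filter.2 ⟨Finset.mem_univ _, hXSne, ?_, by omega⟩
            intro h
            obtain ⟨v, hv⟩ := hXSne
            exact (Finset.mem_sdiff.1 hv).2 (h hv)
          have hcard := hXsmin _ htight2
          have heq : Xs \ S = Xs :=
            Finset.eq_of_subset_of_card_le (Finset.sdiff_subset) hcard
          have hdisj : Xs ∩ S = ∅ := by
            rw [← Finset.disjoint_iff_inter_eq_empty, ← heq]
            exact Finset.sdiff_disjoint
          have hRdisj : R₀ ∩ Xs = ∅ := by
            rw [← Finset.disjoint_iff_inter_eq_empty] at hdisj ⊢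
            exact hdisj.symm.mono_left hRS
          have hc := hcond Xs hXsne
          rw [if_pos hRdisj] at hc
          have hp := hpres Xs hdisj
          omega
        obtain ⟨a, ⟨haA, haF⟩, hta, hha⟩ := harc
        have htaS : tail a ∈ S := (Finset.mem_inter.1 hta).2
        have htaX : tail a ∈ Xs := (Finset.mem_inter.1 hta).1
        have hhaS : head a ∉ S := (Finset.mem_sdiff.1 hha).2
        have hhaX : head a ∈ Xs := (Finset.mem_sdiff.1 hha).1
        refine ⟨a, haA, haF, htaS, hhaS, ?_⟩
        by_contra hsafe
        obtain ⟨X, hXT, htaXn, hhaXm⟩ := hviol a haA haF hhaS hsafe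
        obtain ⟨_, hXne, hXnS, hXtight⟩ := Finset.mem_filter.1 hXT
        -- uncross Xs and X
        have hint : (Xs ∩ X).Nonempty := ⟨head a, Finset.mem_inter.2 ⟨hhaX, hhaXm⟩⟩
        have hun : (Xs ∪ X).Nonempty := hXsne.mono Finset.subset_union_left
        have hsm := inDeg_submod' tail head (A \ F) Xs X
        have hsp := hsup Xs X hint
        have hi1 := hinv _ hint
        have hi2 := hinv _ hun
        have htint : inDeg tail head (A \ F) (Xs ∩ X) = p (Xs ∩ X) := by omega
        have hintT : Xs ∩ X ∈ Tset := by
          refine Finset.mem_filter.2 ⟨Finset.mem_univ _, hint, ?_, htint⟩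
          intro h
          exact hhaS (h (Finset.mem_inter.2 ⟨hhaX, hhaXm⟩))
        have hcard := hXsmin _ hintT
        have heq : Xs ∩ X = Xs :=
          Finset.eq_of_subset_of_card_le Finset.inter_subset_left hcard
        have hXsX : Xs ⊆ X := heq ▸ Finset.inter_subset_right
        exact htaXn (hXsX htaX)
    -- extend the branching along the safe arc
    obtain ⟨a, haA, haF, htaS, hhaS, hsafeP⟩ := hsafe
    have hn' : ((Finset.univ : Finset V) \ insert (head a) S).card = n := by
      have : (Finset.univ : Finset V) \ insert (head a) S =
          ((Finset.univ : Finset V) \ S).erase (head a) := by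
        ext v
        simp only [Finset.mem_sdiff, Finset.mem_erase, Finset.mem_insert, Finset.mem_univ,
          true_and]
        tauto
      rw [this, Finset.card_erase_of_mem
        (Finset.mem_sdiff.2 ⟨Finset.mem_univ _, hhaS⟩), hn]
      omega
    exact ih (insert (head a) S) (insert a F) hn'
      (Finset.insert_subset haA hFA)
      (extend_branching tail head hBr htaS hhaS) hsafeP

end Grow

section Edmonds

variable {V α : Type} [Fintype V] [Nonempty V] [Fintype α] (tail head : α → V)

lemma grow (A : Finset α) (R₀ : Finset V) (hR₀ : R₀.Nonempty) (p : Finset V → ℕ)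
    (hmono : ∀ X Y : Finset V, X ⊆ Y → p Y ≤ p X)
    (hsup : ∀ X Y : Finset V, (X ∩ Y).Nonempty → p X + p Y ≤ p (X ∩ Y) + p (X ∪ Y))
    (hcond : ∀ X : Finset V, X.Nonempty →
      p X + (if R₀ ∩ X = ∅ then 1 else 0) ≤ inDeg tail head A X) :
    ∃ B : Finset α, B ⊆ A ∧ IsBranching tail head Finset.univ B R₀ ∧
      ∀ X : Finset V, X.Nonempty → p X ≤ inDeg tail head (A \ B) X := by
  apply grow_aux tail head A R₀ p hmono hsup hcond ((Finset.univ \ R₀).card) R₀ ∅ rfl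
    (Finset.empty_subset A)
  · refine ⟨Finset.Subset.refl R₀, ?_, ?_, ?_, ?_⟩
    · intro a ha; exact absurd ha (Finset.notMem_empty a)
    · intro r _ a ha; exact absurd ha (Finset.notMem_empty a)
    · intro v hv hvR; exact absurd hv hvR
    · intro v hv; exact ⟨v, hv, Relation.ReflTransGen.refl⟩
  · intro X hX
    rw [Finset.sdiff_empty]
    have := hcond X hX
    split at this <;> omega

noncomputable def demand {V : Type} (L : List (Finset V)) (X : Finset V) : ℕ :=
  List.countP (fun R => decide (R ∩ X = ∅)) L

lemma demand_nil {V : Type} (X : Finset V) : demand ([] : List (Finset V)) X = 0 := rfl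

lemma demand_cons {V : Type} (R : Finset V) (L : List (Finset V)) (X : Finset V) :
    demand (R :: L) X = demand L X + (if R ∩ X = ∅ then 1 else 0) := by
  unfold demand
  rw [List.countP_cons]
  split <;> simp_all

lemma demand_mono {V : Type} (L : List (Finset V)) {X Y : Finset V} (h : X ⊆ Y) :
    demand L Y ≤ demand L X := by
  unfold demand
  apply List.countP_mono_left
  intro R _ hR
  rw [decide_eq_true_iff] at hR ⊢
  rw [← Finset.disjoint_iff_inter_eq_empty] at hR ⊢
  exact hR.mono_right h

lemma demand_supermod {V : Type} (L : List (Finset V)) (X Y : Finset V) :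
    demand L X + demand L Y ≤ demand L (X ∩ Y) + demand L (X ∪ Y) := by
  induction L with
  | nil => simp [demand_nil]
  | cons R L ih =>
    rw [demand_cons, demand_cons, demand_cons, demand_cons]
    have h1 : R ∩ X = ∅ → R ∩ (X ∩ Y) = ∅ := by
      intro h
      rw [← Finset.disjoint_iff_inter_eq_empty] at h ⊢
      exact h.mono_right Finset.inter_subset_left
    have h2 : R ∩ Y = ∅ → R ∩ (X ∩ Y) = ∅ := by
      intro h
      rw [← Finset.disjoint_iff_inter_eq_empty] at h ⊢
      exact h.mono_right Finset.inter_subset_right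
    have h3 : R ∩ X = ∅ → R ∩ Y = ∅ → R ∩ (X ∪ Y) = ∅ := by
      intro ha hb
      rw [← Finset.disjoint_iff_inter_eq_empty] at ha hb ⊢
      rw [Finset.disjoint_union_right]
      exact ⟨ha, hb⟩
    by_cases hx : R ∩ X = ∅ <;> by_cases hy : R ∩ Y = ∅
    · rw [if_pos hx, if_pos hy, if_pos (h1 hx), if_pos (h3 hx hy)]; omega
    · rw [if_pos hx, if_neg hy, if_pos (h1 hx)]; split <;> omega
    · rw [if_neg hx, if_pos hy, if_pos (h2 hy)]; split <;> omega
    · rw [if_neg hx, if_neg hy]; split <;> split <;> omega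

lemma edmonds : ∀ (L : List (Finset V)) (A : Finset α), (∀ R ∈ L, R.Nonempty) →
    (∀ X : Finset V, X.Nonempty → demand L X ≤ inDeg tail head A X) →
    ∃ Bs : List (Finset α),
      List.Forall₂ (fun R B => IsBranching tail head Finset.univ B R) L Bs ∧
      (∀ B ∈ Bs, B ⊆ A) ∧ List.Pairwise Disjoint Bs := by
  intro L
  induction L with
  | nil => exact fun A _ _ => ⟨[], List.Forall₂.nil, by simp, List.Pairwise.nil⟩
  | cons R₀ L' ih =>
    intro A hne hcond
    obtain ⟨B, hBA, hBbr, hinv⟩ := grow tail head A R₀ (hne R₀ List.mem_cons_self)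
      (demand L')
      (fun X Y h => demand_mono L' h)
      (fun X Y _ => demand_supermod L' X Y)
      (fun X hX => by rw [← demand_cons]; exact hcond X hX)
    obtain ⟨Bs, h2, h3, h4⟩ := ih (A \ B)
      (fun R hR => hne R (List.mem_cons_of_mem _ hR)) hinv
    refine ⟨B :: Bs, List.Forall₂.cons hBbr h2, ?_, ?_⟩
    · intro B' hB'
      rcases List.mem_cons.1 hB' with rfl | hB'
      · exact hBA
      · exact (h3 B' hB').trans (Finset.sdiff_subset)
    · refine List.Pairwise.cons ?_ h4
      intro B' hB'
      exact Finset.disjoint_of_subset_right (h3 B' hB') Finset.sdiff_disjoint.symm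

end Edmonds

section FinalHelpers

variable {V α : Type} [Fintype V] [Nonempty V] [Fintype α] (tail head : α → V)

lemma branching_singleton {B : Finset α} {r : V}
    (h : IsBranching tail head Finset.univ B {r}) :
    IsArborescence tail head Finset.univ B r := by
  obtain ⟨h1, h2, h3, h4, h5⟩ := h
  refine ⟨Finset.mem_univ r, h2, fun a ha => h3 r (Finset.mem_singleton_self r) a ha,
    fun v hv hvr => h4 v hv (by simp [hvr]), fun v hv => ?_⟩
  obtain ⟨r', hr', hre⟩ := h5 v hv
  rw [Finset.mem_singleton] at hr'
  exact hr' ▸ hre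

lemma mcnt_add (M N : Multiset V) (X : Finset V) :
    mcnt (M + N) X = mcnt M X + mcnt N X := by
  unfold mcnt
  rw [Multiset.filter_add, Multiset.card_add]

end FinalHelpers

/-- **Lemma (k spanning arborescences plus a spanning branching).**  For `k ≥ 1`,
`c ≤ |V|` and `U ⊆ V` with `|U| ≤ c`, the digraph `D` contains `k` pairwise arc-disjoint
spanning arborescences together with a further arc-disjoint spanning branching `F` with
`R(F) ⊇ U` and `|R(F)| = c` if and only if for every subpartition `P` of `V`:
(i)  `∑_{X∈P} d_A^-(X) ≥ k(|P|-1)`, and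
(ii) `∑_{X∈P} d_A^-(X) ≥ k(|P|-1) + |{X ∈ P : X ∩ U = ∅}| - (c - |U|)`. -/
theorem k_plus_extra {V α : Type} [Fintype V] [Nonempty V] [Fintype α]
    (tail head : α → V) (hloopless : ∀ a : α, tail a ≠ head a)
    (k : ℕ) (hk : 1 ≤ k) (c : ℕ) (hc : c ≤ Fintype.card V)
    (U : Finset V) (hU : U.card ≤ c) :
    (∃ (T : Fin k → Finset α) (rt : Fin k → V) (B : Finset α) (R : Finset V),
        (∀ i, IsArborescence tail head Finset.univ (T i) (rt i)) ∧
        (∀ i j, i ≠ j → Disjoint (T i) (T j)) ∧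
        (∀ i, Disjoint (T i) B) ∧
        IsBranching tail head Finset.univ B R ∧ U ⊆ R ∧ R.card = c) ↔
    (∀ P : Finset (Finset V), IsSubpartition P →
      ((k : ℤ) * ((P.card : ℤ) - 1) ≤
          ∑ X ∈ P, (inDeg tail head (Finset.univ : Finset α) X : ℤ)) ∧
      ((k : ℤ) * ((P.card : ℤ) - 1) +
            ((P.filter fun X => X ∩ U = ∅).card : ℤ) - ((c : ℤ) - (U.card : ℤ)) ≤
          ∑ X ∈ P, (inDeg tail head (Finset.univ : Finset α) X : ℤ))) := by
  constructor
  · -- forward (easy) direction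
    rintro ⟨T, rt, B, R, hT, hTd, hTB, hBr, hUR, hRc⟩ P hP
    have hperX : ∀ X : Finset V,
        (∑ i : Fin k, inDeg tail head (T i) X) + inDeg tail head B X ≤
          inDeg tail head (Finset.univ : Finset α) X := by
      intro X
      have hfd : ∀ i j : Fin (k+1), i ≠ j →
          Disjoint ((Fin.cons B T : Fin (k+1) → Finset α) i)
            ((Fin.cons B T : Fin (k+1) → Finset α) j) := by
        intro i j hij
        rcases Fin.eq_zero_or_eq_succ i with rfl | ⟨i', rfl⟩ <;>
          rcases Fin.eq_zero_or_eq_succ j with rfl | ⟨j', rfl⟩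
        · exact absurd rfl hij
        · simpa using (hTB j').symm
        · simpa using hTB i'
        · have hij' : i' ≠ j' := fun h => hij (by rw [h])
          simpa using hTd i' j' hij'
      have hs := sum_inDeg_le tail head (Fin.cons B T : Fin (k+1) → Finset α) hfd X
      rw [Fin.sum_univ_succ] at hs
      simp only [Fin.cons_zero, Fin.cons_succ] at hs
      omega
    have htot : (∑ i : Fin k, ∑ X ∈ P, (inDeg tail head (T i) X : ℤ)) +
        ∑ X ∈ P, (inDeg tail head B X : ℤ) ≤
        ∑ X ∈ P, (inDeg tail head (Finset.univ : Finset α) X : ℤ) := by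
      rw [Finset.sum_comm, ← Finset.sum_add_distrib]
      apply Finset.sum_le_sum
      intro X _
      exact_mod_cast hperX X
    have hsumarb : (k : ℤ) * ((P.card : ℤ) - 1) ≤
        ∑ i : Fin k, ∑ X ∈ P, (inDeg tail head (T i) X : ℤ) := by
      calc (k : ℤ) * ((P.card : ℤ) - 1)
          = ∑ _i : Fin k, ((P.card : ℤ) - 1) := by
            rw [Finset.sum_const, Finset.card_univ, Fintype.card_fin, nsmul_eq_mul]
        _ ≤ _ := Finset.sum_le_sum (fun i _ => arb_sum tail head hP (hT i))
    have hbrsum := branching_sum tail head hP hBr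
    have hcnt := count_Ufree hP hUR hRc
    have hBnn : (0:ℤ) ≤ ∑ X ∈ P, (inDeg tail head B X : ℤ) :=
      Finset.sum_nonneg (fun X _ => by positivity)
    exact ⟨by linarith, by linarith⟩
  · -- backward (hard) direction
    intro hcond
    classical
    set d : Finset V → ℕ := fun X => inDeg tail head (Finset.univ : Finset α) X with hd
    have hdsub : ∀ X Y : Finset V, d (X ∪ Y) + d (X ∩ Y) ≤ d X + d Y := by
      intro X Y
      simpa [hd] using inDeg_submod tail head (Finset.univ : Finset α) X Y
    have hdsum : ∀ P : Finset (Finset V),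
        ∑ X ∈ P, (d X : ℤ) = ∑ X ∈ P, (inDeg tail head (Finset.univ : Finset α) X : ℤ) :=
      fun P => rfl
    have hi : ∀ P : Finset (Finset V), IsSubpartition P →
        ∑ X ∈ P, ((k:ℤ) - d X) ≤ (k:ℤ) := by
      intro P hP
      have h1 := (hcond P hP).1
      have h2 : ∑ X ∈ P, ((k:ℤ) - d X) =
          (k:ℤ) * P.card - ∑ X ∈ P, (d X : ℤ) := by
        rw [Finset.sum_sub_distrib, Finset.sum_const, nsmul_eq_mul]
        ring
      rw [h2, hdsum P]
      linarith
    have hUc : U.card ≤ c := hU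
    have hc1 : 1 ≤ c := by
      by_contra hc0
      push_neg at hc0
      have hc0' : c = 0 := by omega
      have hU0 : U = ∅ := Finset.card_eq_zero.1 (by omega)
      have hPuniv : IsSubpartition ({Finset.univ} : Finset (Finset V)) := by
        refine ⟨fun X hX => ?_, fun X hX Y hY hne => ?_⟩
        · rw [Finset.mem_singleton] at hX
          exact hX ▸ Finset.univ_nonempty
        · rw [Finset.mem_singleton] at hX hY
          exact absurd (hX.trans hY.symm) hne
      have h2 := (hcond _ hPuniv).2
      have hdeg : inDeg tail head (Finset.univ : Finset α) (Finset.univ : Finset V) = 0 := by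
        rw [inDeg, Finset.card_eq_zero, Finset.filter_eq_empty_iff]
        intro a _
        simp
      have hfil : ({Finset.univ} : Finset (Finset V)).filter
          (fun X => X ∩ U = ∅) = {Finset.univ} := by
        rw [Finset.filter_eq_self]
        intro X hX
        rw [Finset.mem_singleton] at hX
        rw [hX, hU0, Finset.inter_empty]
      rw [hfil] at h2
      rw [Finset.sum_singleton, Finset.card_singleton, hdeg, hU0, hc0'] at h2
      simp at h2
    set m := c - U.card with hm
    have hmz : (m : ℤ) = (c : ℤ) - U.card := by
      rw [hm]
      omega
    set g : Finset V → ℤ := fun X => (k:ℤ) - d X + (if X ∩ U = ∅ then 1 else 0) with hg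
    have hgsup : ∀ X Y : Finset V, (X ∩ Y).Nonempty →
        g X + g Y ≤ g (X ∩ Y) + g (X ∪ Y) := by
      intro X Y hXY
      have hsm := hdsub X Y
      have e1 : X ∩ U = ∅ → (X ∩ Y) ∩ U = ∅ := by
        intro h
        rw [← Finset.disjoint_iff_inter_eq_empty] at h ⊢
        exact h.mono_left Finset.inter_subset_left
      have e3 : Y ∩ U = ∅ → (X ∩ Y) ∩ U = ∅ := by
        intro h
        rw [← Finset.disjoint_iff_inter_eq_empty] at h ⊢
        exact h.mono_left Finset.inter_subset_right
      have e2 : X ∩ U = ∅ → Y ∩ U = ∅ → (X ∪ Y) ∩ U = ∅ := by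
        intro ha hb
        rw [← Finset.disjoint_iff_inter_eq_empty] at ha hb ⊢
        exact Finset.disjoint_union_left.2 ⟨ha, hb⟩
      simp only [hg]
      by_cases h1 : X ∩ U = ∅ <;> by_cases h2 : Y ∩ U = ∅
      · rw [if_pos h1, if_pos h2, if_pos (e1 h1), if_pos (e2 h1 h2)]
        push_cast
        omega
      · rw [if_pos h1, if_neg h2, if_pos (e1 h1)]
        split <;> push_cast <;> omega
      · rw [if_neg h1, if_pos h2, if_pos (e3 h2)]
        split <;> push_cast <;> omega
      · rw [if_neg h1, if_neg h2]
        split <;> split <;> push_cast <;> omega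
    have hgbd : ∀ P : Finset (Finset V), IsSubpartition P →
        ∑ X ∈ P, g X ≤ ((k + m : ℕ) : ℤ) := by
      intro P hP
      have h2 := (hcond P hP).2
      have hsplit : ∑ X ∈ P, g X = (∑ X ∈ P, ((k:ℤ) - d X)) +
          ((P.filter fun X => X ∩ U = ∅).card : ℤ) := by
        simp only [hg]
        rw [Finset.sum_add_distrib]
        congr 1
        rw [Finset.sum_boole]
      have h3 : ∑ X ∈ P, ((k:ℤ) - d X) =
          (k:ℤ) * P.card - ∑ X ∈ P, (d X : ℤ) := by
        rw [Finset.sum_sub_distrib, Finset.sum_const, nsmul_eq_mul]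
        ring
      rw [hsplit, h3, hdsum P]
      push_cast [hm]
      have : ((c:ℤ) - U.card) = ((c - U.card : ℕ) : ℤ) := by omega
      linarith
    obtain ⟨M', hM'card, hM'cov⟩ := cover (k + m) g hgsup hgbd
    have hcovM' : ∀ X : Finset V, X.Nonempty → (k:ℤ) - d X ≤ (mcnt M' X : ℤ) := by
      intro X hX
      have h := hM'cov X hX
      simp only [hg] at h
      unfold mcnt
      split at h <;> omega
    obtain ⟨M, hMM', hMcard, hMcov⟩ := shrink d k hdsub hi m M' (by omega) hcovM'
    set W := (M' - M).toFinset \ U with hW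
    have hWcard : W.card ≤ m := by
      calc W.card ≤ (M' - M).toFinset.card := Finset.card_le_card Finset.sdiff_subset
        _ ≤ Multiset.card (M' - M) := Multiset.toFinset_card_le _
        _ = m := by rw [Multiset.card_sub hMM', hM'card, hMcard]; omega
    have hR1card : (U ∪ W).card ≤ c := by
      calc (U ∪ W).card ≤ U.card + W.card := Finset.card_union_le _ _
        _ ≤ U.card + m := by omega
        _ = c := by omega
    obtain ⟨R, hR1R, _, hRc⟩ := Finset.exists_subsuperset_card_eq
      (Finset.subset_univ (U ∪ W)) hR1card (by rw [Finset.card_univ]; exact hc)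
    have hUR : U ⊆ R := Finset.subset_union_left.trans hR1R
    have hWR : W ⊆ R := Finset.subset_union_right.trans hR1R
    have hRne : R.Nonempty := Finset.card_pos.1 (by omega)
    set L : List (Finset V) := R :: (M.toList.map (fun r => ({r} : Finset V))) with hL
    have hLne : ∀ S ∈ L, S.Nonempty := by
      intro S hS
      rcases List.mem_cons.1 hS with rfl | hS
      · exact hRne
      · obtain ⟨r, _, rfl⟩ := List.mem_map.1 hS
        exact Finset.singleton_nonempty r
    have hsing : ∀ X : Finset V,
        demand (M.toList.map (fun r => ({r} : Finset V))) X + mcnt M X = k := by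
      intro X
      have hgen : ∀ l : List V,
          demand (l.map (fun r => ({r} : Finset V))) X + mcnt (↑l) X = l.length := by
        intro l
        induction l with
        | nil => simp [demand_nil, mcnt]
        | cons r l ih =>
          rw [List.map_cons, demand_cons]
          have hc' : mcnt (↑(r :: l)) X = mcnt (↑l) X + (if r ∈ X then 1 else 0) :=
            mcnt_cons r (↑l) X
          rw [hc']
          have hiff : (({r} : Finset V) ∩ X = ∅) ↔ r ∉ X := by
            constructor
            · intro h hr
              have hmem : r ∈ ({r} : Finset V) ∩ X :=
                Finset.mem_inter.2 ⟨Finset.mem_singleton_self r, hr⟩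
              rw [h] at hmem
              exact absurd hmem (Finset.notMem_empty r)
            · intro h
              rw [Finset.singleton_inter_of_notMem h]
          by_cases hr : r ∈ X
          · rw [if_neg (fun h => (hiff.1 h) hr), if_pos hr, List.length_cons]
            omega
          · rw [if_pos (hiff.2 hr), if_neg hr, List.length_cons]
            omega
      have h := hgen M.toList
      rw [Multiset.coe_toList, Multiset.length_toList, hMcard] at h
      exact h
    have hdem : ∀ X : Finset V, X.Nonempty →
        demand L X ≤ inDeg tail head (Finset.univ : Finset α) X := by
      intro X hX
      have hgoal : demand L X ≤ d X := by
        rw [hL, demand_cons]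
        have hks := hsing X
        have hcovk := hMcov X hX
        by_cases hRX : R ∩ X = ∅
        · rw [if_pos hRX]
          have hXU : X ∩ U = ∅ := by
            rw [← Finset.disjoint_iff_inter_eq_empty] at hRX ⊢
            exact (hRX.mono_left hUR).symm
          have hMX : mcnt (M' - M) X = 0 := by
            unfold mcnt
            rw [Multiset.card_eq_zero, Multiset.filter_eq_nil]
            intro u hu huX
            have huW : u ∈ W := by
              rw [hW, Finset.mem_sdiff]
              refine ⟨Multiset.mem_toFinset.2 hu, fun huU => ?_⟩
              have hmem : u ∈ X ∩ U := Finset.mem_inter.2 ⟨huX, huU⟩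
              rw [hXU] at hmem
              exact absurd hmem (Finset.notMem_empty u)
            have hmem : u ∈ R ∩ X := Finset.mem_inter.2 ⟨hWR huW, huX⟩
            rw [hRX] at hmem
            exact absurd hmem (Finset.notMem_empty u)
          have hMeq : M + (M' - M) = M' := add_tsub_cancel_of_le hMM'
          have hm'm : mcnt M' X = mcnt M X := by
            calc mcnt M' X = mcnt (M + (M' - M)) X := by rw [hMeq]
              _ = mcnt M X + mcnt (M' - M) X := mcnt_add _ _ _
              _ = mcnt M X := by rw [hMX]; omega
          have hgX := hM'cov X hX
          simp only [hg] at hgX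
          rw [if_pos hXU] at hgX
          have hgX' : (k:ℤ) - d X + 1 ≤ (mcnt M X : ℤ) := by
            rw [← hm'm]
            unfold mcnt
            exact_mod_cast hgX
          omega
        · rw [if_neg hRX]
          omega
      exact hgoal
    obtain ⟨Bs, hF2, hBsA, hBsP⟩ := edmonds tail head L (Finset.univ : Finset α) hLne hdem
    rw [hL] at hF2
    cases hF2 with
    | cons hB0 hrest =>
      rename_i B0 Bs'
      have hlen : Bs'.length = k := by
        have := List.Forall₂.length_eq hrest
        rw [List.length_map, Multiset.length_toList, hMcard] at this
        omega
      have hMlen : M.toList.length = k := by rw [Multiset.length_toList, hMcard]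
      have hget := (List.forall₂_iff_get.1 hrest).2
      refine ⟨fun i : Fin k => Bs'.get ⟨i, by omega⟩,
              fun i : Fin k => M.toList.get ⟨i, by omega⟩,
              B0, R, ?_, ?_, ?_, hB0, hUR, hRc⟩
      · intro i
        have h := hget i (by rw [List.length_map]; omega) (by omega)
        simp only [List.get_eq_getElem, List.getElem_map] at h
        exact branching_singleton tail head h
      · intro i j hij
        have hpw : List.Pairwise Disjoint Bs' := (List.pairwise_cons.1 hBsP).2
        have hpw' := List.pairwise_iff_getElem.1 hpw
        have hijn : (i : ℕ) ≠ (j : ℕ) := fun h => hij (Fin.ext h)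
        rcases Nat.lt_or_ge (i : ℕ) (j : ℕ) with hlt | hge
        · have := hpw' i j (by omega) (by omega) hlt
          simpa [List.get_eq_getElem] using this
        · have hlt' : (j : ℕ) < (i : ℕ) := by omega
          have := hpw' j i (by omega) (by omega) hlt'
          exact (by simpa [List.get_eq_getElem] using this : Disjoint _ _).symm
      · intro i
        have hhead := (List.pairwise_cons.1 hBsP).1
        exact (hhead _ (List.get_mem Bs' _)).symm
end

section
/- Let D = (V, A) be a digraph, k ≥ 0 and c ≥ 1 integers, T_1, …, T_k pairwise arc-disjoint spanning arborescences of D, and F a spanning c-branching of D arc-disjoint from T_1, …, T_k, with components T^1, …, T^c. Set A' := A \ (A(T^1) ∪ … ∪ A(T^{c−1})) and U := V(T^1) ∪ … ∪ V(T^{c−1}). If a subpartition P of V satisfies Σ_{X∈P} d_{A'}^-(X) = k(|P| − 1) + |{X ∈ P : X ∩ U = ∅}| − 1, then every member X of P satisfies X ⊆ U or X ⊆ V(T^c). -/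
/-!
Digraphs may have parallel arcs but no loops.  We model a digraph `D = (V, A)` by a finite
vertex type `V`, a finite arc type `α` and maps `tail head : α → V` with `tail a ≠ head a`.
Subdigraphs are given by their arc sets (`Finset α`) together with vertex sets (`Finset V`).
-/

attribute [local instance] Classical.propDecidable

/-- The vertex set of the component of a branching `B` rooted at `r`. -/
noncomputable def compVerts {V α : Type} [Fintype V] (tail head : α → V) (B : Finset α)
    (r : V) : Finset V :=
  Finset.univ.filter (DiReach tail head B r)

section Aux
variable {V α : Type} (tail head : α → V)

lemma diReach_cross {B : Finset α} {X : Finset V} {s v : V}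
    (h : DiReach tail head B s v) (hs : s ∉ X) (hv : v ∈ X) :
    ∃ a ∈ B, tail a ∉ X ∧ head a ∈ X ∧ DiReach tail head B s (head a) := by
  induction h with
  | refl => exact absurd hv hs
  | @tail b c h1 h2 ih =>
    by_cases hb : b ∈ X
    · exact ih hb
    · obtain ⟨a, haB, hta, hha⟩ := h2
      refine ⟨a, haB, ?_, ?_, ?_⟩
      · rw [hta]; exact hb
      · rwa [hha]
      · rw [hha]; exact h1.tail ⟨a, haB, hta, hha⟩

lemma reach_to_root {B : Finset α} {r : V}
    (hroot : ∀ a ∈ B, head a ≠ r) {x : V} (h : DiReach tail head B x r) : x = r := by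
  have key : ∀ b, DiReach tail head B x b → b = r → x = r := by
    intro b hb
    induction hb with
    | refl => exact fun h => h
    | @tail b c h1 h2 ih =>
      intro hc
      obtain ⟨a, haB, hta, hha⟩ := h2
      exact absurd (hha.trans hc) (hroot a haB)
  exact key r h rfl

lemma root_unique {B : Finset α} {R : Finset V}
    (hroot : ∀ r ∈ R, ∀ a ∈ B, head a ≠ r)
    (hind : ∀ v, v ∉ R → (B.filter fun a => head a = v).card = 1)
    {r r' v : V} (hr : r ∈ R) (hr' : r' ∈ R)
    (h : DiReach tail head B r v) (h' : DiReach tail head B r' v) : r = r' := by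
  revert h'
  induction h with
  | refl => exact fun h' => (reach_to_root tail head (hroot r hr) h').symm
  | @tail b c h1 h2 ih =>
    intro h'
    obtain ⟨a, haB, hta, hha⟩ := h2
    have hcR : c ∉ R := fun hcR => hroot c hcR a haB hha
    rcases h'.cases_tail with hcr' | ⟨b', h1', h2'⟩
    · exact absurd (hcr' ▸ hr') hcR
    · obtain ⟨a', ha'B, hta', hha'⟩ := h2'
      obtain ⟨u, hu⟩ := Finset.card_eq_one.1 (hind c hcR)
      have haa : a = a' := by
        have h1 : a ∈ B.filter fun a => head a = c := Finset.mem_filter.2 ⟨haB, hha⟩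
        have h2 : a' ∈ B.filter fun a => head a = c := Finset.mem_filter.2 ⟨ha'B, hha'⟩
        rw [hu, Finset.mem_singleton] at h1 h2
        rw [h1, h2]
      have hb : b' = b := by rw [← hta, ← hta', haa]
      exact ih (hb ▸ h1')

lemma one_le_inDeg {B : Finset α} {X : Finset V} {a : α}
    (ha : a ∈ B) (ht : tail a ∉ X) (hh : head a ∈ X) : 1 ≤ inDeg tail head B X :=
  Finset.card_pos.2 ⟨a, Finset.mem_filter.2 ⟨ha, ht, hh⟩⟩

lemma sum_inDeg_bound {S : Finset (Finset V)} {C : Finset α} {r : V}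
    (hdis : ∀ X ∈ S, ∀ Y ∈ S, X ≠ Y → Disjoint X Y)
    (hone : ∀ X ∈ S, r ∉ X → 1 ≤ inDeg tail head C X) :
    (S.card : ℤ) - 1 ≤ ∑ X ∈ S, (inDeg tail head C X : ℤ) := by
  have h1 : (S.filter fun X => r ∈ X).card ≤ 1 := by
    rw [Finset.card_le_one]
    intro X hX Y hY
    simp only [Finset.mem_filter] at hX hY
    by_contra hne
    exact Finset.disjoint_left.1 (hdis X hX.1 Y hY.1 hne) hX.2 hY.2
  have h2 : ((S.filter fun X => ¬ r ∈ X).card : ℤ) ≤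
      ∑ X ∈ S.filter (fun X => ¬ r ∈ X), (inDeg tail head C X : ℤ) := by
    rw [Finset.card_eq_sum_ones]
    push_cast
    apply Finset.sum_le_sum
    intro X hX
    simp only [Finset.mem_filter] at hX
    exact_mod_cast hone X hX.1 hX.2
  have h3 : ∑ X ∈ S.filter (fun X => ¬ r ∈ X), (inDeg tail head C X : ℤ) ≤
      ∑ X ∈ S, (inDeg tail head C X : ℤ) :=
    Finset.sum_le_sum_of_subset_of_nonneg (Finset.filter_subset _ _)
      (fun X _ _ => by positivity)
  have h4 : (S.filter fun X => r ∈ X).card + (S.filter fun X => ¬ r ∈ X).card = S.card :=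
    Finset.card_filter_add_card_filter_not _
  have h5 := h2.trans h3
  have h6 : (S.card : ℤ) - 1 ≤ ((S.filter fun X => ¬ r ∈ X).card : ℤ) := by omega
  linarith

end Aux

/-- Let `T_1, …, T_k` be pairwise arc-disjoint spanning arborescences, `F` an arc-disjoint
spanning `c`-branching with components `T^1, …, T^c` (the component of the root `ρ i`),
`A' := A \ (A(T^1) ∪ … ∪ A(T^{c-1}))` and `U := V(T^1) ∪ … ∪ V(T^{c-1})`.  If a
subpartition `P` satisfies `∑_{X∈P} d_{A'}^-(X) = k(|P|-1) + |{X ∈ P : X ∩ U = ∅}| - 1`,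
then every member `X` of `P` satisfies `X ⊆ U` or `X ⊆ V(T^c)`. -/
theorem tight_subpartition_members_located {V α : Type} [Fintype V] [Nonempty V]
    [Fintype α] (tail head : α → V) (hloopless : ∀ a : α, tail a ≠ head a)
    (k c : ℕ) (hc : 1 ≤ c)
    (T : Fin k → Finset α) (rt : Fin k → V)
    (hT : ∀ i, IsArborescence tail head Finset.univ (T i) (rt i))
    (hTdisj : ∀ i j, i ≠ j → Disjoint (T i) (T j))
    (B : Finset α) (ρ : Fin c → V) (hρ : Function.Injective ρ)
    (hF : IsBranching tail head Finset.univ B (Finset.image ρ Finset.univ))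
    (hFdisj : ∀ i, Disjoint (T i) B)
    (A' : Finset α)
    (hA' : A' = Finset.univ \
      ((Finset.univ.filter fun i : Fin c => (i : ℕ) < c - 1).biUnion
        fun i => compArcs tail head B (ρ i)))
    (U : Finset V)
    (hU : U = (Finset.univ.filter fun i : Fin c => (i : ℕ) < c - 1).biUnion
      fun i => compVerts tail head B (ρ i))
    (P : Finset (Finset V)) (hP : IsSubpartition P)
    (heq : ∑ X ∈ P, (inDeg tail head A' X : ℤ) =
      (k : ℤ) * ((P.card : ℤ) - 1) + ((P.filter fun X => X ∩ U = ∅).card : ℤ) - 1) :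
    ∀ X ∈ P, X ⊆ U ∨ X ⊆ compVerts tail head B (ρ ⟨c - 1, by omega⟩) := by
  classical
  set last : Fin c := ⟨c - 1, by omega⟩ with hlast
  set C : Finset α := compArcs tail head B (ρ last) with hC
  obtain ⟨hRsub, hBends, hroot, hind0, hreachB⟩ := hF
  have hind : ∀ v, v ∉ Finset.image ρ Finset.univ →
      (B.filter fun a => head a = v).card = 1 := fun v hv => hind0 v (Finset.mem_univ v) hv
  have hmemR : ∀ i : Fin c, ρ i ∈ Finset.image ρ Finset.univ :=
    fun i => Finset.mem_image_of_mem ρ (Finset.mem_univ i)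
  have huniq : ∀ (i j : Fin c) (v : V), DiReach tail head B (ρ i) v →
      DiReach tail head B (ρ j) v → i = j := fun i j v hi hj =>
    hρ (root_unique tail head hroot hind (hmemR i) (hmemR j) hi hj)
  -- membership facts
  have hUmem : ∀ v : V, v ∈ U ↔ ∃ i : Fin c, (i : ℕ) < c - 1 ∧
      DiReach tail head B (ρ i) v := by
    intro v
    rw [hU, Finset.mem_biUnion]
    constructor
    · rintro ⟨i, hi, hv⟩
      simp only [Finset.mem_filter, Finset.mem_univ, true_and] at hi
      rw [compVerts, Finset.mem_filter] at hv
      exact ⟨i, hi, hv.2⟩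
    · rintro ⟨i, hi, hv⟩
      exact ⟨i, by simp [hi], by rw [compVerts, Finset.mem_filter]; exact ⟨Finset.mem_univ v, hv⟩⟩
  have hCVmem : ∀ v : V, v ∈ compVerts tail head B (ρ last) ↔
      DiReach tail head B (ρ last) v := by
    intro v; rw [compVerts, Finset.mem_filter]
    exact ⟨fun h => h.2, fun h => ⟨Finset.mem_univ v, h⟩⟩
  have hUor : ∀ v : V, v ∈ U ∨ v ∈ compVerts tail head B (ρ last) := by
    intro v
    obtain ⟨r, hrR, hrv⟩ := hreachB v (Finset.mem_univ v)
    obtain ⟨i, -, rfl⟩ := Finset.mem_image.1 hrR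
    by_cases hi : (i : ℕ) < c - 1
    · exact Or.inl ((hUmem v).2 ⟨i, hi, hrv⟩)
    · have : i = last := by
        apply Fin.ext
        have := i.isLt
        simp only [hlast]
        omega
      exact Or.inr ((hCVmem v).2 (this ▸ hrv))
  -- subset facts
  have hCA' : C ⊆ A' := by
    intro a ha
    rw [hC, compArcs, Finset.mem_filter] at ha
    rw [hA', Finset.mem_sdiff]
    refine ⟨Finset.mem_univ a, ?_⟩
    intro hmem
    obtain ⟨i, hi, hai⟩ := Finset.mem_biUnion.1 hmem
    simp only [Finset.mem_filter, Finset.mem_univ, true_and] at hi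
    rw [compArcs, Finset.mem_filter] at hai
    have : i = last := huniq i last (head a) hai.2 ha.2
    rw [this] at hi
    simp only [hlast] at hi
    omega
  have hCB : C ⊆ B := by rw [hC, compArcs]; exact Finset.filter_subset _ _
  have hTA' : ∀ i, T i ⊆ A' := by
    intro i a ha
    rw [hA', Finset.mem_sdiff]
    refine ⟨Finset.mem_univ a, ?_⟩
    intro hmem
    obtain ⟨j, -, haj⟩ := Finset.mem_biUnion.1 hmem
    rw [compArcs, Finset.mem_filter] at haj
    exact Finset.disjoint_left.1 (hFdisj i) ha haj.1
  -- pointwise inequality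
  have hpoint : ∀ X : Finset V,
      inDeg tail head C X + ∑ i : Fin k, inDeg tail head (T i) X ≤ inDeg tail head A' X := by
    intro X
    set p : α → Prop := fun a => tail a ∉ X ∧ head a ∈ X with hp
    have hdisjTT : ∀ i ∈ (Finset.univ : Finset (Fin k)), ∀ j ∈ (Finset.univ : Finset (Fin k)),
        i ≠ j → Disjoint ((T i).filter p) ((T j).filter p) :=
      fun i _ j _ hij => Finset.disjoint_filter_filter (hTdisj i j hij)
    have hsum : ∑ i : Fin k, inDeg tail head (T i) X =
        (Finset.univ.biUnion fun i : Fin k => (T i).filter p).card :=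
      (Finset.card_biUnion hdisjTT).symm
    have hdisjC : Disjoint (C.filter p)
        (Finset.univ.biUnion fun i : Fin k => (T i).filter p) := by
      rw [Finset.disjoint_biUnion_right]
      intro i _
      exact Finset.disjoint_filter_filter
        (Finset.disjoint_of_subset_left hCB (hFdisj i).symm)
    have hsub : C.filter p ∪ (Finset.univ.biUnion fun i : Fin k => (T i).filter p) ⊆
        A'.filter p := by
      apply Finset.union_subset
      · exact Finset.filter_subset_filter p hCA'
      · exact Finset.biUnion_subset.2 fun i _ => Finset.filter_subset_filter p (hTA' i)
    calc inDeg tail head C X + ∑ i : Fin k, inDeg tail head (T i) X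
        = (C.filter p ∪ (Finset.univ.biUnion fun i : Fin k => (T i).filter p)).card := by
          rw [hsum, Finset.card_union_of_disjoint hdisjC]; rfl
      _ ≤ (A'.filter p).card := Finset.card_le_card hsub
      _ = inDeg tail head A' X := rfl
  -- main argument
  intro X0 hX0
  by_contra hbad
  push_neg at hbad
  obtain ⟨hnU, hnC⟩ := hbad
  obtain ⟨x, hxX, hxU⟩ := Finset.not_subset.1 hnU
  obtain ⟨y, hyX, hyC⟩ := Finset.not_subset.1 hnC
  have hxreach : DiReach tail head B (ρ last) x :=
    (hCVmem x).1 ((hUor x).resolve_left hxU)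
  have hyU : y ∈ U := (hUor y).resolve_right hyC
  set f : Finset (Finset V) := P.filter (fun X => X ∩ U = ∅) with hf
  have hX0f : X0 ∉ f := by
    rw [hf, Finset.mem_filter]
    rintro ⟨-, hXU⟩
    have : y ∈ X0 ∩ U := Finset.mem_inter.2 ⟨hyX, hyU⟩
    rw [hXU] at this
    exact absurd this (Finset.notMem_empty y)
  set g : Finset (Finset V) := insert X0 f with hg
  have hgP : g ⊆ P := by
    rw [hg]
    exact Finset.insert_subset hX0 (Finset.filter_subset _ _)
  have hgcard : g.card = f.card + 1 := Finset.card_insert_of_notMem hX0f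
  -- sum bound for C over g
  have hboundC : (f.card : ℤ) ≤ ∑ X ∈ P, (inDeg tail head C X : ℤ) := by
    have hone : ∀ X ∈ g, ρ last ∉ X → 1 ≤ inDeg tail head C X := by
      intro X hXg hrX
      rcases Finset.mem_insert.1 hXg with rfl | hXf
      · obtain ⟨a, haB, hta, hha, hreach⟩ := diReach_cross tail head hxreach hrX hxX
        exact one_le_inDeg tail head
          (by rw [hC, compArcs, Finset.mem_filter]; exact ⟨haB, hreach⟩) hta hha
      · rw [hf, Finset.mem_filter] at hXf
        obtain ⟨v, hvX⟩ := hP.1 X hXf.1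
        have hvU : v ∉ U := by
          intro hvU
          have : v ∈ X ∩ U := Finset.mem_inter.2 ⟨hvX, hvU⟩
          rw [hXf.2] at this
          exact absurd this (Finset.notMem_empty v)
        have hvreach : DiReach tail head B (ρ last) v :=
          (hCVmem v).1 ((hUor v).resolve_left hvU)
        obtain ⟨a, haB, hta, hha, hreach⟩ := diReach_cross tail head hvreach hrX hvX
        exact one_le_inDeg tail head
          (by rw [hC, compArcs, Finset.mem_filter]; exact ⟨haB, hreach⟩) hta hha
    have hdisg : ∀ X ∈ g, ∀ Y ∈ g, X ≠ Y → Disjoint X Y :=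
      fun X hX Y hY => hP.2 X (hgP hX) Y (hgP hY)
    have h1 := sum_inDeg_bound tail head hdisg hone
    have h2 : ∑ X ∈ g, (inDeg tail head C X : ℤ) ≤ ∑ X ∈ P, (inDeg tail head C X : ℤ) :=
      Finset.sum_le_sum_of_subset_of_nonneg hgP (fun X _ _ => by positivity)
    have h3 : (g.card : ℤ) - 1 = (f.card : ℤ) := by rw [hgcard]; push_cast; ring
    linarith
  -- sum bound for each T i over P
  have hboundT : ∀ i : Fin k, (P.card : ℤ) - 1 ≤ ∑ X ∈ P, (inDeg tail head (T i) X : ℤ) := by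
    intro i
    apply sum_inDeg_bound tail head hP.2
    intro X hXP hrX
    obtain ⟨v, hvX⟩ := hP.1 X hXP
    have hvreach : DiReach tail head (T i) (rt i) v := (hT i).2.2.2.2 v (Finset.mem_univ v)
    obtain ⟨a, haT, hta, hha, -⟩ := diReach_cross tail head hvreach hrX hvX
    exact one_le_inDeg tail head haT hta hha
  -- combine
  have hmain : (f.card : ℤ) + (k : ℤ) * ((P.card : ℤ) - 1) ≤
      ∑ X ∈ P, (inDeg tail head A' X : ℤ) := by
    have h1 : ∑ X ∈ P, ((inDeg tail head C X : ℤ) + ∑ i : Fin k, (inDeg tail head (T i) X : ℤ))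
        ≤ ∑ X ∈ P, (inDeg tail head A' X : ℤ) := by
      apply Finset.sum_le_sum
      intro X hX
      have := hpoint X
      push_cast
      exact_mod_cast this
    rw [Finset.sum_add_distrib, Finset.sum_comm] at h1
    have h2 : ∑ i : Fin k, ∑ X ∈ P, (inDeg tail head (T i) X : ℤ) ≥
        ∑ i : Fin k, ((P.card : ℤ) - 1) := Finset.sum_le_sum fun i _ => hboundT i
    have h3 : ∑ i : Fin k, ((P.card : ℤ) - 1) = (k : ℤ) * ((P.card : ℤ) - 1) := by
      rw [Finset.sum_const, Finset.card_univ, Fintype.card_fin, nsmul_eq_mul]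
    linarith
  rw [heq] at hmain
  linarith
end
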